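/- arXiv:1712.10178 — 7 statements merged into one kernel-verified Lean document; each statement's English description precedes it below -/
import Mathlib

section
/- Let F be a field of characteristic 2 and β₁,…,βₙ ∈ F×. The diagonal bilinear Pfister form ⟨⟨β₁,…,βₙ⟩⟩_b (the tensor product of the forms ⟨1,βᵢ⟩_b) is anisotropic if and only if [F²(β₁,…,βₙ) : F²] = 2ⁿ. -/
/-- The subfield of squares `F²` of a field of characteristic 2. -/
def sqSubfield (F : Type*) [Field F] [CharP F 2] : Subfield F where
  carrier := {x | ∃ y : F, y ^ 2 = x}
  mul_mem' := by rintro a b ⟨y, rfl⟩ ⟨z, rfl⟩; exact ⟨y * z, by ring⟩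
  one_mem' := ⟨1, one_pow 2⟩
  add_mem' := by
    rintro a b ⟨y, rfl⟩ ⟨z, rfl⟩
    exact ⟨y + z, by rw [add_sq]; linear_combination (y*z) * (CharP.cast_eq_zero F 2)⟩
  zero_mem' := ⟨0, by ring⟩
  neg_mem' := by rintro a ⟨y, rfl⟩; exact ⟨y, (CharTwo.neg_eq _).symm⟩
  inv_mem' := by rintro a ⟨y, rfl⟩; exact ⟨y⁻¹, by rw [inv_pow]⟩

/-- The monomial `β₁^{d₁} ⋯ βₙ^{dₙ}`. -/
def mono {R : Type*} [CommRing R] {n : ℕ} (β : Fin n → R) (d : Fin n → Bool) : R :=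
  ∏ i, if d i then β i else 1

/-- The diagonal bilinear `n`-fold Pfister form `⟨⟨β₁,…,βₙ⟩⟩_b`. -/
def bPf (F : Type*) [Field F] {n : ℕ} (β : Fin n → F) (v w : (Fin n → Bool) → F) : F :=
  ∑ d, mono β d * v d * w d

/-- Pure part of the bilinear Pfister form. -/
def bPfPure (F : Type*) [Field F] {n : ℕ} (β : Fin n → F)
    (v w : {d : Fin n → Bool // d ≠ fun _ => false} → F) : F :=
  ∑ d, mono β d.1 * v d * w d

/-- Anisotropy of a bilinear form. -/
def BAniso (F : Type*) [Field F] {V : Type*} [AddCommGroup V] [Module F V]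
    (B : V → V → F) : Prop :=
  ∀ v : V, v ≠ 0 → B v v ≠ 0

/-- Isometry of bilinear forms. -/
def BilinIsom (F : Type*) [Field F] {V W : Type*} [AddCommGroup V] [Module F V]
    [AddCommGroup W] [Module F W] (B₁ : V → V → F) (B₂ : W → W → F) : Prop :=
  ∃ e : V ≃ₗ[F] W, ∀ v w, B₂ (e v) (e w) = B₁ v w

/-- Isometry of quadratic forms (given as value functions). -/
def QuadIsom (F : Type*) [Field F] {V W : Type*} [AddCommGroup V] [Module F V]
    [AddCommGroup W] [Module F W] (q₁ : V → F) (q₂ : W → F) : Prop :=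
  ∃ e : V ≃ₗ[F] W, ∀ v, q₂ (e v) = q₁ v

/-- The quadratic Pfister form `⟨⟨β₁,…,β_m, a]]` as a value function. -/
def qPf (R : Type*) [CommRing R] {m : ℕ} (β : Fin m → R) (a : R)
    (x : (Fin m → Bool) → R × R) : R :=
  ∑ e, mono β e * ((x e).1 ^ 2 + (x e).1 * (x e).2 + a * (x e).2 ^ 2)

/-- Minimal index where `d` is `true`. -/
noncomputable def minIdx {n : ℕ} (d : Fin n → Bool) (hd : d ≠ fun _ => false) : Fin n :=
  (Finset.univ.filter fun i => d i = true).min' (by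
    obtain ⟨i, hi⟩ := Function.ne_iff.mp hd
    exact ⟨i, Finset.mem_filter.mpr ⟨Finset.mem_univ i, by simpa using hi⟩⟩)

/-- Remove the `ℓ`-th entry from a tuple. -/
def removeIdx {R : Type*} {n : ℕ} (α : Fin n → R) (ℓ : Fin n) (i : Fin (n - 1)) : R :=
  if h : (i : ℕ) < (ℓ : ℕ) then α ⟨i, by omega⟩ else α ⟨(i : ℕ) + 1, by omega⟩

/-- First `n-1` entries of a tuple. -/
def front {R : Type*} {n : ℕ} (α : Fin n → R) (i : Fin (n - 1)) : R :=
  α ⟨i, by omega⟩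

/-- Last entry of a tuple (junk value `0` if the tuple is empty). -/
def qlast {R : Type*} [CommRing R] {n : ℕ} (α : Fin n → R) : R :=
  if h : n = 0 then 0 else α ⟨n - 1, by omega⟩

/-!
Every element of `F²` is a square, so the values `⟨⟨β⟩⟩_b(v, v) = ∑_d β^d v_d²` are exactly the
`F²`-linear combinations of the `2ⁿ` monomials `β^d`, and anisotropy says that these monomials are
linearly independent over `F²`. Their `F²`-span is closed under multiplication, since the product
of two monomials is a square times a monomial; hence it is `F²[β] = F²(β)`, and the monomials are
independent exactly when `[F²(β) : F²] = 2ⁿ`.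
-/

section Monomials

variable {R : Type*} [CommRing R] {n : ℕ}

lemma ite_mul_ite_eq (x : R) (a b : Bool) :
    (if a then x else 1) * (if b then x else 1) =
      (if a && b then x else 1) ^ 2 * (if a != b then x else 1) := by
  cases a <;> cases b <;> simp [sq]

lemma mono_mul (β : Fin n → R) (d e : Fin n → Bool) :
    mono β d * mono β e = (mono β fun i => d i && e i) ^ 2 * mono β fun i => d i != e i := by
  simp only [mono, ← Finset.prod_mul_distrib, ← Finset.prod_pow]
  exact Finset.prod_congr rfl fun i _ => ite_mul_ite_eq (β i) (d i) (e i)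

lemma mono_single (β : Fin n → R) (i : Fin n) : mono β (fun j => decide (j = i)) = β i := by
  simp [mono]

end Monomials

namespace sqSubfield

variable {F : Type*} [Field F] [CharP F 2]

def square (y : F) : sqSubfield F := ⟨y ^ 2, y, rfl⟩

@[simp]
lemma coe_square (y : F) : (square y : F) = y ^ 2 := rfl

lemma square_surjective : Function.Surjective (square (F := F)) := by
  rintro ⟨_, y, rfl⟩
  exact ⟨y, rfl⟩

lemma square_eq_zero_iff {y : F} : square y = 0 ↔ y = 0 := by
  rw [← Subtype.coe_inj, coe_square, ZeroMemClass.coe_zero, pow_eq_zero_iff two_ne_zero]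

lemma smul_eq_coe_mul (c : sqSubfield F) (x : F) : c • x = (c : F) * x := rfl

instance : Algebra.IsIntegral (sqSubfield F) F where
  isIntegral x := ⟨Polynomial.X ^ 2 - Polynomial.C (square x),
    Polynomial.monic_X_pow_sub_C _ two_ne_zero,
    by simp [Polynomial.eval₂_sub]; exact sub_eq_zero.mpr rfl⟩

end sqSubfield

section OverSquares

open sqSubfield

variable {F : Type*} [Field F] [CharP F 2]

theorem bAniso_diagonal_iff_linearIndependent {ι : Type*} [Fintype ι] (a : ι → F) :
    BAniso F (fun v w : ι → F => ∑ i, a i * v i * w i) ↔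
      LinearIndependent (sqSubfield F) a := by
  have diagonal_eq : ∀ v : ι → F, ∑ i, a i * v i * v i = ∑ i, square (v i) • a i := fun v =>
    Finset.sum_congr rfl fun i _ => by rw [smul_eq_coe_mul, coe_square]; ring
  rw [Fintype.linearIndependent_iff]
  constructor
  · intro haniso g hg i
    obtain ⟨v, rfl⟩ := square_surjective.comp_left g
    have hv : v = 0 := by
      by_contra hv
      exact haniso v hv ((diagonal_eq v).trans hg)
    simp [hv, square_eq_zero_iff]
  · intro hli v hv hB
    exact hv (funext fun i => square_eq_zero_iff.mp (hli _ ((diagonal_eq v).symm.trans hB) i))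

theorem span_range_mono_eq_adjoin {n : ℕ} (β : Fin n → F) :
    Submodule.span (sqSubfield F) (Set.range (mono β)) =
      Subalgebra.toSubmodule (Algebra.adjoin (sqSubfield F) (Set.range β)) := by
  set M := Submodule.span (sqSubfield F) (Set.range (mono β))
  apply le_antisymm
  · refine Submodule.span_le.mpr ?_
    rintro _ ⟨d, rfl⟩
    refine Subalgebra.prod_mem _ fun i _ => ?_
    split_ifs
    · exact Algebra.subset_adjoin ⟨i, rfl⟩
    · exact one_mem _
  · have one_mem : (1 : F) ∈ M := Submodule.subset_span ⟨fun _ => false, by simp [mono]⟩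
    have mul_le : M * M ≤ M := by
      rw [Submodule.span_mul_span, Submodule.span_le]
      rintro _ ⟨_, ⟨d, rfl⟩, _, ⟨e, rfl⟩, rfl⟩
      change mono β d * mono β e ∈ M
      rw [mono_mul, ← coe_square, ← smul_eq_coe_mul]
      exact M.smul_mem _ (Submodule.subset_span ⟨_, rfl⟩)
    have adjoin_le : Algebra.adjoin (sqSubfield F) (Set.range β) ≤
        M.toSubalgebra one_mem fun x y hx hy => mul_le (Submodule.mul_mem_mul hx hy) := by
      refine Algebra.adjoin_le ?_
      rintro _ ⟨i, rfl⟩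
      exact Submodule.subset_span ⟨_, mono_single β i⟩
    exact adjoin_le

theorem finrank_adjoin_eq_finrank_span_mono {n : ℕ} (β : Fin n → F) :
    Module.finrank (sqSubfield F) (IntermediateField.adjoin (sqSubfield F) (Set.range β)) =
      Module.finrank (sqSubfield F) (Submodule.span (sqSubfield F) (Set.range (mono β))) := by
  rw [span_range_mono_eq_adjoin, ← IntermediateField.adjoin_toSubalgebra]
  rfl

end OverSquares

theorem stmt_1_general (F : Type*) [Field F] [CharP F 2] (n : ℕ) (β : Fin n → F) :
    BAniso F (bPf F β) ↔
      Module.finrank (sqSubfield F)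
        (IntermediateField.adjoin (sqSubfield F) (Set.range β)) = 2 ^ n := by
  refine (bAniso_diagonal_iff_linearIndependent (mono β)).trans ?_
  rw [linearIndependent_iff_card_eq_finrank_span,
    Set.finrank, ← finrank_adjoin_eq_finrank_span_mono, Fintype.card_fun, Fintype.card_bool,
    Fintype.card_fin, eq_comm]

set_option synthInstance.maxHeartbeats 1000000 in
set_option maxHeartbeats 1000000 in
/-- `⟨⟨β₁,…,βₙ⟩⟩_b` is anisotropic iff `[F²(β₁,…,βₙ) : F²] = 2ⁿ`. -/
theorem stmt_1 (F : Type*) [Field F] [CharP F 2] (n : ℕ) (β : Fin n → F)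
    (hβ : ∀ i, β i ≠ 0) :
    BAniso F (bPf F β) ↔
      Module.finrank (sqSubfield F)
        (IntermediateField.adjoin (sqSubfield F) (Set.range β)) = 2 ^ n :=
  stmt_1_general F n β
end

section
/- Let F be a field of characteristic 2 with [F : F²] = 2ⁿ and let B = ⟨⟨β₁,…,βₙ⟩⟩_b be an anisotropic bilinear n-fold Pfister form. Then the set D(B) = {B(v,v) : v ∈ V, B(v,v) ≠ 0} together with 0 is all of F, and D(B') ∪ {0}, where B' is the pure part, is an F²-subspace of F of dimension 2ⁿ − 1 over F². -/
lemma sqrt'_spec {F : Type*} [Field F] [CharP F 2] (k : sqSubfield F) :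
    (k.2 : ∃ y : F, y ^ 2 = (k : F)).choose ^ 2 = (k : F) :=
  Exists.choose_spec (k.2 : ∃ y : F, y ^ 2 = (k : F))

/-- if `[F : F²] = 2ⁿ` and `B = ⟨⟨β₁,…,βₙ⟩⟩_b` is anisotropic, then
`D(B) ∪ {0} = F`, and `D(B') ∪ {0}` is an `F²`-subspace of `F` of dimension `2ⁿ - 1`. -/
theorem stmt_2 (F : Type*) [Field F] [CharP F 2] (n : ℕ)
    (hrk : Module.finrank (sqSubfield F) F = 2 ^ n)
    (β : Fin n → F) (hβ : ∀ i, β i ≠ 0) (haniso : BAniso F (bPf F β)) :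
    (∀ x : F, ∃ v : (Fin n → Bool) → F, bPf F β v v = x) ∧
    ∃ W : Submodule (sqSubfield F) F,
      (W : Set F) = {x : F | ∃ v, bPfPure F β v v = x} ∧
      Module.finrank (sqSubfield F) W = 2 ^ n - 1 := by
  classical
  set K := sqSubfield F with hK
  set m : (Fin n → Bool) → F := fun d => mono β d with hm
  have hsmul : ∀ (k : K) (x : F), k • x = (k : F) * x := fun _ _ => rfl
  -- values of bPf as linear combinations
  have hval : ∀ v : (Fin n → Bool) → F,
      bPf F β v v = ∑ d, (v d) ^ 2 * m d := by
    intro v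
    unfold bPf
    exact Finset.sum_congr rfl fun d _ => by rw [hm]; ring
  have hvalP : ∀ v : {d : Fin n → Bool // d ≠ fun _ => false} → F,
      bPfPure F β v v = ∑ d, (v d) ^ 2 * m d.1 := by
    intro v
    unfold bPfPure
    exact Finset.sum_congr rfl fun d _ => by rw [hm]; ring
  -- linear independence of monomials over K
  have hli : LinearIndependent K m := by
    rw [Fintype.linearIndependent_iff]
    intro g hg
    set v : (Fin n → Bool) → F := fun d => ((g d).2 : ∃ y : F, y ^ 2 = ((g d) : F)).choose
      with hv
    have hv2 : ∀ d, (v d) ^ 2 = ((g d) : F) := fun d => sqrt'_spec (g d)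
    have hB : bPf F β v v = 0 := by
      rw [hval]
      rw [← hg]
      exact Finset.sum_congr rfl fun d _ => by rw [hv2, hsmul]
    by_cases hv0 : v = 0
    · intro d
      have := hv2 d
      rw [hv0] at this
      simp only [Pi.zero_apply] at this
      exact Subtype.ext (by simpa using this.symm)
    · exact absurd hB (haniso v hv0)
  have hcard : Fintype.card (Fin n → Bool) = 2 ^ n := by simp
  have hcard' : Fintype.card (Fin n → Bool) = Module.finrank K F := by rw [hcard, hrk]
  -- basis
  have hspan : Submodule.span K (Set.range m) = ⊤ := by
    have := coe_basisOfLinearIndependentOfCardEqFinrank hli hcard'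
    rw [← this]
    exact Module.Basis.span_eq _
  constructor
  · intro x
    have hx : x ∈ Submodule.span K (Set.range m) := by rw [hspan]; trivial
    obtain ⟨c, hc⟩ := (Submodule.mem_span_range_iff_exists_fun K).mp hx
    refine ⟨fun d => ((c d).2 : ∃ y : F, y ^ 2 = ((c d) : F)).choose, ?_⟩
    rw [hval, ← hc]
    exact Finset.sum_congr rfl fun d _ => by rw [sqrt'_spec (c d), hsmul]
  · set m' : {d : Fin n → Bool // d ≠ fun _ => false} → F := fun d => m d.1 with hm'
    have hli' : LinearIndependent K m' := hli.comp Subtype.val Subtype.val_injective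
    refine ⟨Submodule.span K (Set.range m'), ?_, ?_⟩
    · ext x
      simp only [SetLike.mem_coe, Set.mem_setOf_eq]
      rw [Submodule.mem_span_range_iff_exists_fun]
      constructor
      · rintro ⟨c, hc⟩
        refine ⟨fun d => ((c d).2 : ∃ y : F, y ^ 2 = ((c d) : F)).choose, ?_⟩
        rw [hvalP, ← hc]
        exact Finset.sum_congr rfl fun d _ => by rw [sqrt'_spec (c d), hsmul]
      · rintro ⟨v, rfl⟩
        refine ⟨fun d => ⟨(v d) ^ 2, ⟨v d, rfl⟩⟩, ?_⟩
        rw [hvalP]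
        exact Finset.sum_congr rfl fun d _ => by rw [hsmul]
    · rw [finrank_span_eq_card hli']
      have : Fintype.card {d : Fin n → Bool // d ≠ fun _ => false}
          = Fintype.card (Fin n → Bool) - Fintype.card {d : Fin n → Bool // d = fun _ => false} :=
        Fintype.card_subtype_compl _
      rw [this, Fintype.card_subtype_eq, hcard]
end

section
/- Let F be a field of characteristic 2, x a transcendental element, and consider B₁ = ⟨⟨x⟩⟩_b, B₂ = ⟨⟨x+1⟩⟩_b over F(x) (or F((x))). Then B₁ and B₂ are anisotropic and non-isometric, but ⟨⟨1⟩⟩_b ⊗ B₁ ≅ ⟨⟨1⟩⟩_b ⊗ B₂ (= ⟨⟨1,x⟩⟩_b), i.e. the metabolic 2-fold Pfister form ⟨⟨1,x⟩⟩_b admits two non-isometric anisotropic 1-fold Pfister complements. -/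
section Stmt8Aux

private lemma sum_bool1 {M : Type*} [AddCommMonoid M] (g : (Fin 1 → Bool) → M) :
    ∑ d, g d = g ![false] + g ![true] := by
  rw [show (Finset.univ : Finset (Fin 1 → Bool)) = {![false], ![true]} by decide]
  rw [Finset.sum_insert (by decide), Finset.sum_singleton]

private lemma sum_bool2 {M : Type*} [AddCommMonoid M] (g : (Fin 2 → Bool) → M) :
    ∑ d, g d = g ![false,false] + g ![true,false] + g ![false,true] + g ![true,true] := by
  rw [show (Finset.univ : Finset (Fin 2 → Bool)) =
      {![false,false], ![true,false], ![false,true], ![true,true]} by decide]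
  rw [Finset.sum_insert (by decide), Finset.sum_insert (by decide),
    Finset.sum_insert (by decide), Finset.sum_singleton, add_assoc, add_assoc]

private lemma not_sq_X (F : Type*) [Field F] : ∀ f : RatFunc F, f ^ 2 ≠ RatFunc.X := by
  intro f h
  have hf : f ≠ 0 := by rintro rfl; simp at h; exact RatFunc.X_ne_zero h.symm
  have hd := RatFunc.intDegree_mul hf hf
  rw [← sq, h, RatFunc.intDegree_X] at hd
  omega

private def Emap8 (K : Type*) [Field K] (X s : K) :
    ((Fin 2 → Bool) → K) →ₗ[K] ((Fin 2 → Bool) → K) where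
  toFun v d :=
    if d 1 then
      (if d 0 then s * v ![true, false] + X * s * v ![true, true]
       else s * v ![true, false] + v ![false, true] + s * v ![true, true])
    else
      (if d 0 then v ![true, false] + v ![false, true] + v ![true, true]
       else v ![false, false])
  map_add' v w := by funext d; simp only [Pi.add_apply]; split_ifs <;> ring
  map_smul' r v := by
    funext d
    simp only [Pi.smul_apply, smul_eq_mul, RingHom.id_apply]
    split_ifs <;> ring

private lemma Emap8_apply {K : Type*} [Field K] (X s : K) (v : (Fin 2 → Bool) → K) :
    Emap8 K X s v ![false, false] = v ![false, false] ∧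
    Emap8 K X s v ![true, false] = v ![true, false] + v ![false, true] + v ![true, true] ∧
    Emap8 K X s v ![false, true] = s * v ![true, false] + v ![false, true] + s * v ![true, true] ∧
    Emap8 K X s v ![true, true] = s * v ![true, false] + X * s * v ![true, true] := by
  refine ⟨?_, ?_, ?_, ?_⟩ <;>
    simp only [Emap8, LinearMap.coe_mk, AddHom.coe_mk, Matrix.cons_val_zero,
      Matrix.cons_val_one, Matrix.head_cons, if_true, if_false, Bool.false_eq_true]


end Stmt8Aux

/-- over `K = F(x)`, `char F = 2`, the forms `B₁ = ⟨⟨x⟩⟩_b` and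
`B₂ = ⟨⟨x+1⟩⟩_b` are anisotropic and non-isometric, yet
`⟨⟨1⟩⟩_b ⊗ B₁ ≅ ⟨⟨1,x⟩⟩_b ≅ ⟨⟨1⟩⟩_b ⊗ B₂`. -/

theorem stmt_8 (F : Type*) [Field F] [CharP F 2] :
    BAniso (RatFunc F) (bPf (RatFunc F) ![RatFunc.X]) ∧
    BAniso (RatFunc F) (bPf (RatFunc F) ![RatFunc.X + 1]) ∧
    ¬ BilinIsom (RatFunc F) (bPf (RatFunc F) ![RatFunc.X])
        (bPf (RatFunc F) ![RatFunc.X + 1]) ∧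
    BilinIsom (RatFunc F) (bPf (RatFunc F) ![1, RatFunc.X])
        (bPf (RatFunc F) ![1, RatFunc.X + 1]) := by
  classical
  have h2 : (2 : RatFunc F) = 0 := by
    have h : CharP (RatFunc F) 2 :=
      charP_of_injective_algebraMap (algebraMap F (RatFunc F)).injective 2
    exact_mod_cast CharP.cast_eq_zero (RatFunc F) 2
  have hX1 : (RatFunc.X : RatFunc F) + 1 ≠ 0 := by
    intro h
    exact not_sq_X F 1 (by linear_combination -h + h2)
  have nsqX1 : ∀ f : RatFunc F, f ^ 2 ≠ RatFunc.X + 1 := by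
    intro f h
    exact not_sq_X F (f + 1) (by linear_combination h + (f + 1) * h2)
  have aniso : ∀ β : RatFunc F, (∀ f : RatFunc F, f ^ 2 ≠ β) →
      BAniso (RatFunc F) (bPf (RatFunc F) ![β]) := by
    intro β hβ v hv hB
    rw [bPf, sum_bool1] at hB
    simp only [mono, Fin.prod_univ_one, Matrix.cons_val_zero, Matrix.cons_val_fin_one,
      if_false, if_true, Bool.false_eq_true, one_mul] at hB
    by_cases hb : v ![true] = 0
    · rw [hb] at hB
      have ha : v ![false] = 0 := by
        have h0 : v ![false] * v ![false] = 0 := by linear_combination hB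
        exact mul_self_eq_zero.mp h0
      obtain ⟨d, hd⟩ := Function.ne_iff.mp hv
      have hcases : ∀ d : Fin 1 → Bool, d = ![false] ∨ d = ![true] := by decide
      rcases hcases d with rfl | rfl
      · exact hd ha
      · exact hd hb
    · refine hβ (v ![false] / v ![true]) ?_
      rw [div_pow, div_eq_iff (pow_ne_zero 2 hb)]
      linear_combination hB - β * v ![true] ^ 2 * h2
  refine ⟨aniso _ (not_sq_X F), aniso _ nsqX1, ?_, ?_⟩
  · rintro ⟨e, he⟩
    have h1 := he (fun d => if d 0 then (0 : RatFunc F) else 1)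
      (fun d => if d 0 then (0 : RatFunc F) else 1)
    have h2' := he (fun d => if d 0 then (1 : RatFunc F) else 0)
      (fun d => if d 0 then (1 : RatFunc F) else 0)
    have h3 := he (fun d => if d 0 then (0 : RatFunc F) else 1)
      (fun d => if d 0 then (1 : RatFunc F) else 0)
    simp only [bPf, sum_bool1, mono, Fin.prod_univ_one, Matrix.cons_val_zero,
      Matrix.cons_val_fin_one, if_false, if_true, Bool.false_eq_true, one_mul, mul_one,
      mul_zero, zero_mul, add_zero, zero_add] at h1 h2' h3
    set a := e (fun d => if d 0 then (0 : RatFunc F) else 1) ![false] with ha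
    set b := e (fun d => if d 0 then (0 : RatFunc F) else 1) ![true] with hb
    set c := e (fun d => if d 0 then (1 : RatFunc F) else 0) ![false] with hc
    set d' := e (fun d => if d 0 then (1 : RatFunc F) else 0) ![true] with hd'
    have key : (RatFunc.X + 1) * (a * d' + b * c) ^ 2 = RatFunc.X := by
      linear_combination (c * c + (RatFunc.X + 1) * (d' * d')) * h1 + h2' -
        (a * c + (RatFunc.X + 1) * (b * d')) * h3 +
        2 * a * b * c * d' * (RatFunc.X + 1) * h2
    have hm : 1 + (a * d' + b * c) ≠ 0 := by
      intro h0
      have : (1 : RatFunc F) = 0 := by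
        linear_combination key + (RatFunc.X + 1) * (1 - (a * d' + b * c)) * h0
      exact one_ne_zero this
    refine not_sq_X F ((a * d' + b * c) / (1 + (a * d' + b * c))) ?_
    rw [div_pow, div_eq_iff (pow_ne_zero 2 hm)]
    linear_combination key - RatFunc.X * ((a * d' + b * c) + (a * d' + b * c) ^ 2) * h2
  · set s : RatFunc F := (RatFunc.X + 1)⁻¹ with hs_def
    have hs : (RatFunc.X + 1) * s = 1 := mul_inv_cancel₀ hX1
    let Emap := Emap8 (RatFunc F) RatFunc.X s
    have hEapp := Emap8_apply RatFunc.X s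
    have hinj : Function.Injective Emap := by
      rw [← LinearMap.ker_eq_bot, LinearMap.ker_eq_bot']
      intro v hv0
      obtain ⟨eff, etf, eft, ett⟩ := hEapp v
      have hff : v ![false, false] = 0 := by
        rw [← eff, hv0]; rfl
      have htf : v ![true, false] + v ![false, true] + v ![true, true] = 0 := by
        rw [← etf, hv0]; rfl
      have hft : s * v ![true, false] + v ![false, true] + s * v ![true, true] = 0 := by
        rw [← eft, hv0]; rfl
      have htt : s * v ![true, false] + RatFunc.X * s * v ![true, true] = 0 := by
        rw [← ett, hv0]; rfl
      have hx3 : RatFunc.X * v ![false, true] = 0 := by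
        linear_combination (RatFunc.X + 1) * hft + htf -
          (v ![true, false] + v ![true, true]) * hs -
          (v ![true, false] + v ![false, true] + v ![true, true]) * h2
      have hvft : v ![false, true] = 0 := by
        rcases mul_eq_zero.mp hx3 with h | h
        · exact absurd h RatFunc.X_ne_zero
        · exact h
      have hx4 : (RatFunc.X + 1) * v ![true, true] = 0 := by
        linear_combination (RatFunc.X + 1) * htt -
          (v ![true, false] + RatFunc.X * v ![true, true]) * hs - htf + hvft +
          v ![true, true] * h2
      have hvtt : v ![true, true] = 0 := by
        rcases mul_eq_zero.mp hx4 with h | h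
        · exact absurd h hX1
        · exact h
      have hvtf : v ![true, false] = 0 := by linear_combination htf - hvft - hvtt
      funext d
      have hcases : ∀ d : Fin 2 → Bool,
          d = ![false, false] ∨ d = ![true, false] ∨ d = ![false, true] ∨ d = ![true, true] := by
        decide
      rcases hcases d with rfl | rfl | rfl | rfl <;>
        simp only [Pi.zero_apply, hff, hvtf, hvft, hvtt]
    have hsurj : Function.Surjective Emap := LinearMap.injective_iff_surjective.mp hinj
    refine ⟨LinearEquiv.ofBijective Emap ⟨hinj, hsurj⟩, ?_⟩
    intro v w
    show bPf (RatFunc F) ![1, RatFunc.X + 1] (Emap v) (Emap w) = _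
    obtain ⟨vff, vtf, vft, vtt⟩ := hEapp v
    obtain ⟨wff, wtf, wft, wtt⟩ := hEapp w
    rw [bPf, bPf, sum_bool2, sum_bool2, vff, vtf, vft, vtt, wff, wtf, wft, wtt]
    simp only [mono, Fin.prod_univ_two, Matrix.cons_val_zero, Matrix.cons_val_one,
      Matrix.head_cons, if_true, if_false, Bool.false_eq_true, one_mul, mul_one]
    set a2 := v ![true, false]
    set a3 := v ![false, true]
    set a4 := v ![true, true]
    set b2 := w ![true, false]
    set b3 := w ![false, true]
    set b4 := w ![true, true]
    linear_combination
      (a4*b4 + a4*b3 + a4*b2 + a3*b4 + a3*b2 + a2*b4 + a2*b3 + s*(a4*b4 + a4*b2 + a2*b4) +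
        RatFunc.X*(a4*b4) + RatFunc.X*s*(a4*b2 + a2*b4) + RatFunc.X^2*s*(a4*b4)) * hs +
      (a4*b4 + a4*b3 + a4*b2 + a3*b4 + a3*b3 + a3*b2 + a2*b4 + a2*b3 + s^2*(a2*b2) -
        RatFunc.X*s*(a4*b4) + RatFunc.X*s^2*(a2*b2)) * h2
end

section
/- Let F be a field of characteristic 2 with a valuation v : F× → Γ onto a totally ordered abelian group Γ, and let α₁,…,αₙ ∈ F× have negative values whose classes in Γ/2Γ are linearly independent over 𝔽₂. Then the quadratic n-fold Pfister form φ = ⟨⟨α₁,…,α_{n−1}, αₙ]] is anisotropic. -/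
/-! Write the form as `∑_e β_e (u_e² + u_e w_e + a w_e²)` with `a = αₙ` and monomials `β_e` in
`α₁,…,α_{n-1}`. Since `v(a) < 0` lies outside `2Γ`, the values of `u²` and `a w²` differ and the
cross term `uw` is dominated, so a nonzero term has value `v(β_e) + 2γ` or `v(β_e) + v(a) + 2γ`.
By the `𝔽₂`-independence these classes modulo `2Γ` are distinct for distinct `e`, so the nonzero
terms have pairwise distinct values and their sum cannot vanish. -/

section SubsetSum

variable {ι Γ : Type*} [Fintype ι] [AddCommGroup Γ]

def subsetSum (γ : ι → Γ) (c : ι → Bool) : Γ :=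
  ∑ i, if c i then γ i else 0

theorem subsetSum_xor (γ : ι → Γ) (c c' : ι → Bool) :
    subsetSum γ (fun i => xor (c i) (c' i)) =
      subsetSum γ c + subsetSum γ c' - 2 • subsetSum γ (fun i => c i && c' i) := by
  simp only [subsetSum, ← Finset.sum_add_distrib, Finset.smul_sum, ← Finset.sum_sub_distrib]
  refine Finset.sum_congr rfl fun i _ => ?_
  rcases Bool.eq_false_or_eq_true (c i) with h | h <;>
    rcases Bool.eq_false_or_eq_true (c' i) with h' | h' <;> simp [h, h', two_nsmul]

-- `hind` says that the classes of the `γ i` in `Γ/2Γ` are `𝔽₂`-linearly independent.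
theorem eq_of_subsetSum_add_two_nsmul_eq {γ : ι → Γ}
    (hind : ∀ c : ι → Bool, (∃ i, c i = true) → ∀ g : Γ, subsetSum γ c ≠ 2 • g)
    {c c' : ι → Bool} {g g' : Γ} (h : subsetSum γ c + 2 • g = subsetSum γ c' + 2 • g') :
    c = c' := by
  by_contra hne
  obtain ⟨i, hi⟩ := Function.ne_iff.1 hne
  refine hind (fun i => xor (c i) (c' i)) ⟨i, by simpa using hi⟩
    (subsetSum γ c' + g' - g - subsetSum γ fun i => c i && c' i) ?_
  rw [subsetSum_xor, eq_sub_of_add_eq h]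
  simp only [smul_sub, smul_add, two_nsmul]
  abel

theorem subsetSum_snoc {m : ℕ} (γ : Fin (m + 1) → Γ) (c : Fin m → Bool) (b : Bool) :
    subsetSum γ (Fin.snoc c b) =
      subsetSum (fun i => γ (Fin.castSucc i)) c + if b then γ (Fin.last m) else 0 := by
  simp [subsetSum, Fin.sum_univ_castSucc]

end SubsetSum

theorem mono_ne_zero {R : Type*} [CommRing R] [NoZeroDivisors R] [Nontrivial R] {m : ℕ}
    {β : Fin m → R} (hβ : ∀ i, β i ≠ 0) (e : Fin m → Bool) : mono β e ≠ 0 :=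
  Finset.prod_ne_zero_iff.2 fun i _ => by split_ifs <;> simp [hβ i]

section Valuation

variable {F Γ : Type*} [Field F] [AddCommGroup Γ] [LinearOrder Γ]

structure IsValuationOnUnits (v : F → Γ) : Prop where
  map_mul : ∀ x y : F, x ≠ 0 → y ≠ 0 → v (x * y) = v x + v y
  min_le_map_add : ∀ x y : F, x ≠ 0 → y ≠ 0 → x + y ≠ 0 → min (v x) (v y) ≤ v (x + y)

namespace IsValuationOnUnits

variable {v : F → Γ} {x y : F}

theorem map_one (hv : IsValuationOnUnits v) : v 1 = 0 := by
  simpa using hv.map_mul 1 1 one_ne_zero one_ne_zero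

theorem map_pow_two (hv : IsValuationOnUnits v) (hx : x ≠ 0) : v (x ^ 2) = 2 • v x := by
  rw [sq, hv.map_mul x x hx hx, two_nsmul]

theorem map_prod {ι : Type*} (hv : IsValuationOnUnits v) (s : Finset ι) {f : ι → F}
    (hf : ∀ i ∈ s, f i ≠ 0) : v (∏ i ∈ s, f i) = ∑ i ∈ s, v (f i) := by
  induction s using Finset.cons_induction with
  | empty => simpa using hv.map_one
  | cons a s ha ih =>
    have hs : ∀ i ∈ s, f i ≠ 0 := fun i hi => hf i (Finset.mem_cons_of_mem hi)
    rw [Finset.prod_cons, Finset.sum_cons,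
      hv.map_mul _ _ (hf a (Finset.mem_cons_self a s)) (Finset.prod_ne_zero_iff.2 hs), ih hs]

theorem map_mono (hv : IsValuationOnUnits v) {m : ℕ} {β : Fin m → F} (hβ : ∀ i, β i ≠ 0)
    (e : Fin m → Bool) : v (mono β e) = subsetSum (fun i => v (β i)) e := by
  rw [mono, hv.map_prod _ fun i _ => by split_ifs <;> simp [hβ i], subsetSum]
  refine Finset.sum_congr rfl fun i _ => ?_
  split_ifs
  · rfl
  · exact hv.map_one

variable [IsOrderedAddMonoid Γ]

theorem map_neg (hv : IsValuationOnUnits v) (hx : x ≠ 0) : v (-x) = v x := by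
  have h1 : (-1 : F) ≠ 0 := neg_ne_zero.2 one_ne_zero
  have h2 : 2 • v (-1) = 0 := by
    rw [two_nsmul, ← hv.map_mul _ _ h1 h1, neg_one_mul, neg_neg, hv.map_one]
  rw [← neg_one_mul, hv.map_mul _ _ h1 hx, two_nsmul_eq_zero.1 h2, zero_add]

theorem add_ne_zero_of_map_ne (hv : IsValuationOnUnits v) (hx : x ≠ 0) (h : v x ≠ v y) :
    x + y ≠ 0 := by
  intro hxy
  rw [eq_neg_of_add_eq_zero_right hxy, hv.map_neg hx] at h
  exact h rfl

theorem map_add_of_lt (hv : IsValuationOnUnits v) (hx : x ≠ 0) (hy : y ≠ 0) (h : v x < v y) :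
    v (x + y) = v x := by
  have hxy : x + y ≠ 0 := hv.add_ne_zero_of_map_ne hx h.ne
  refine le_antisymm ?_ (min_eq_left h.le ▸ hv.min_le_map_add x y hx hy hxy)
  by_contra! hlt
  have key := hv.min_le_map_add (x + y) (-y) hxy (neg_ne_zero.2 hy) (by simpa using hx)
  rw [add_neg_cancel_right, hv.map_neg hy] at key
  exact (lt_min hlt h).not_ge key

theorem map_add_of_ne (hv : IsValuationOnUnits v) (hx : x ≠ 0) (hy : y ≠ 0) (h : v x ≠ v y) :
    v (x + y) = min (v x) (v y) := by
  rcases h.lt_or_gt with h | h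
  · rw [hv.map_add_of_lt hx hy h, min_eq_left h.le]
  · rw [add_comm, hv.map_add_of_lt hy hx h, min_eq_right h.le]

theorem sum_ne_zero_and_map_sum {ι : Type*} (hv : IsValuationOnUnits v) {s : Finset ι}
    (hs : s.Nonempty) {f : ι → F} (hf : ∀ i ∈ s, f i ≠ 0) (hinj : Set.InjOn (v ∘ f) s) :
    ∑ i ∈ s, f i ≠ 0 ∧ v (∑ i ∈ s, f i) = s.inf' hs (v ∘ f) := by
  induction hs using Finset.Nonempty.cons_induction with
  | singleton a => simpa using hf a (Finset.mem_singleton_self a)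
  | cons a s ha hs ih =>
    obtain ⟨hsum, hval⟩ := ih (fun i hi => hf i (Finset.mem_cons_of_mem hi))
      (hinj.mono (Finset.subset_cons ha))
    obtain ⟨j, hj, hj_inf⟩ := Finset.exists_mem_eq_inf' hs (v ∘ f)
    have hne : v (f a) ≠ v (∑ i ∈ s, f i) := by
      rw [hval, hj_inf]
      exact fun h => ha (hinj (Finset.mem_cons_self a s) (Finset.mem_cons_of_mem hj) h ▸ hj)
    have hfa := hf a (Finset.mem_cons_self a s)
    rw [Finset.sum_cons, Finset.inf'_cons hs, hv.map_add_of_ne hfa hsum hne, hval]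
    exact ⟨hv.add_ne_zero_of_map_ne hfa hne, rfl⟩

theorem sum_ne_zero {ι : Type*} (hv : IsValuationOnUnits v) {s : Finset ι} {f : ι → F}
    (h : ∃ i ∈ s, f i ≠ 0)
    (hinj : ∀ i ∈ s, ∀ j ∈ s, f i ≠ 0 → f j ≠ 0 → v (f i) = v (f j) → i = j) :
    ∑ i ∈ s, f i ≠ 0 := by
  classical
  obtain ⟨i, hi, hfi⟩ := h
  rw [← Finset.sum_filter_ne_zero]
  refine (hv.sum_ne_zero_and_map_sum ⟨i, Finset.mem_filter.2 ⟨hi, hfi⟩⟩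
    (fun j hj => (Finset.mem_filter.1 hj).2) fun j hj k hk => ?_).1
  rw [Finset.coe_filter] at hj hk
  exact hinj j hj.1 k hk.1 hj.2 hk.2

theorem binaryForm_ne_zero_and_map (hv : IsValuationOnUnits v) {a : F} (ha : a ≠ 0)
    (hva : v a < 0) (hodd : ∀ g : Γ, v a ≠ 2 • g) {u w : F} (huw : u ≠ 0 ∨ w ≠ 0) :
    u ^ 2 + u * w + a * w ^ 2 ≠ 0 ∧
      ∃ (b : Bool) (g : Γ), v (u ^ 2 + u * w + a * w ^ 2) = (if b then v a else 0) + 2 • g := by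
  rcases eq_or_ne w 0 with rfl | hw
  · have hu : u ≠ 0 := huw.resolve_right (not_not.2 rfl)
    exact ⟨by simpa using hu, false, v u, by simp [hv.map_pow_two hu]⟩
  rcases eq_or_ne u 0 with rfl | hu
  · exact ⟨by simpa using ⟨ha, hw⟩, true, v w,
      by simp [hv.map_mul _ _ ha (pow_ne_zero 2 hw), hv.map_pow_two hw]⟩
  have hu2 : u ^ 2 ≠ 0 := pow_ne_zero 2 hu
  have haw : a * w ^ 2 ≠ 0 := mul_ne_zero ha (pow_ne_zero 2 hw)
  have hvu2 : v (u ^ 2) = 2 • v u := hv.map_pow_two hu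
  have hvaw : v (a * w ^ 2) = v a + 2 • v w := by
    rw [hv.map_mul _ _ ha (pow_ne_zero 2 hw), hv.map_pow_two hw]
  have hne : v (u ^ 2) ≠ v (a * w ^ 2) := fun h =>
    hodd (v u - v w) (by rw [smul_sub, ← hvu2, h, hvaw]; abel)
  have hsq := hv.map_add_of_ne hu2 haw hne
  have hsq0 : u ^ 2 + a * w ^ 2 ≠ 0 := hv.add_ne_zero_of_map_ne hu2 hne
  -- `2 v(uw) = v(u²) + v(aw²) - v(a)` exceeds twice the minimum since `v(a) < 0`
  have hcross : v (u ^ 2 + a * w ^ 2) < v (u * w) := by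
    refine lt_of_nsmul_lt_nsmul_right 2 ?_
    calc 2 • v (u ^ 2 + a * w ^ 2) ≤ v (u ^ 2) + v (a * w ^ 2) := by
          rw [hsq, two_nsmul]; exact add_le_add (min_le_left _ _) (min_le_right _ _)
      _ < v (u ^ 2) + v (a * w ^ 2) - v a := lt_sub_right_of_add_lt (add_lt_of_neg_right _ hva)
      _ = 2 • v (u * w) := by rw [hvu2, hvaw, hv.map_mul u w hu hw]; abel
  rw [show u ^ 2 + u * w + a * w ^ 2 = u ^ 2 + a * w ^ 2 + u * w by ring]
  refine ⟨hv.add_ne_zero_of_map_ne hsq0 hcross.ne, ?_⟩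
  rw [hv.map_add_of_lt hsq0 (mul_ne_zero hu hw) hcross, hsq]
  rcases min_choice (v (u ^ 2)) (v (a * w ^ 2)) with h | h
  · exact ⟨false, v u, by rw [h, hvu2]; simp⟩
  · exact ⟨true, v w, by rw [h, hvaw]; simp⟩

theorem pfisterTerm_ne_zero_and_map (hv : IsValuationOnUnits v) {m : ℕ} {β : Fin m → F}
    (hβ : ∀ i, β i ≠ 0) {a : F} (ha : a ≠ 0) (hva : v a < 0) (hodd : ∀ g : Γ, v a ≠ 2 • g)
    (e : Fin m → Bool) (p : F × F) (hp : p ≠ 0) :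
    mono β e * (p.1 ^ 2 + p.1 * p.2 + a * p.2 ^ 2) ≠ 0 ∧
      ∃ (b : Bool) (g : Γ), v (mono β e * (p.1 ^ 2 + p.1 * p.2 + a * p.2 ^ 2)) =
        subsetSum (fun i => v (β i)) e + (if b then v a else 0) + 2 • g := by
  have hp' : p.1 ≠ 0 ∨ p.2 ≠ 0 := by
    by_contra! h
    exact hp (Prod.ext h.1 h.2)
  obtain ⟨hQ, b, g, hvQ⟩ := hv.binaryForm_ne_zero_and_map ha hva hodd hp'
  have hβe : mono β e ≠ 0 := mono_ne_zero hβ e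
  refine ⟨mul_ne_zero hβe hQ, b, g, ?_⟩
  rw [hv.map_mul _ _ hβe hQ, hv.map_mono hβ, hvQ, add_assoc]

theorem qPf_ne_zero (hv : IsValuationOnUnits v) {m : ℕ} {α : Fin (m + 1) → F}
    (hα0 : ∀ i, α i ≠ 0) (hneg : v (α (Fin.last m)) < 0)
    (hind : ∀ c : Fin (m + 1) → Bool, (∃ i, c i = true) →
      ∀ g : Γ, subsetSum (fun i => v (α i)) c ≠ 2 • g)
    {x : (Fin m → Bool) → F × F} (hx : x ≠ 0) :
    qPf F (fun i => α (Fin.castSucc i)) (α (Fin.last m)) x ≠ 0 := by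
  have hodd : ∀ g, v (α (Fin.last m)) ≠ 2 • g := fun g h =>
    hind (Fin.snoc (fun _ => false) true) ⟨Fin.last m, by simp⟩ g
      (by rw [subsetSum_snoc]; simpa [subsetSum] using h)
  have hterm :=
    hv.pfisterTerm_ne_zero_and_map (fun i : Fin m => hα0 i.castSucc) (hα0 _) hneg hodd
  rw [qPf]
  refine hv.sum_ne_zero ?_ fun e _ e' _ he he' heq => ?_
  · obtain ⟨e, he⟩ := Function.ne_iff.1 hx
    exact ⟨e, Finset.mem_univ e, (hterm e (x e) he).1⟩
  · have hsnoc : ∀ (c : Fin m → Bool) (b : Bool), subsetSum (fun i => v (α i)) (Fin.snoc c b) =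
        subsetSum (fun i => v (α i.castSucc)) c + if b then v (α (Fin.last m)) else 0 :=
      subsetSum_snoc _
    obtain ⟨-, b, g, hb⟩ := hterm e (x e) fun h => he (by simp [h])
    obtain ⟨-, b', g', hb'⟩ := hterm e' (x e') fun h => he' (by simp [h])
    rw [← hsnoc] at hb hb'
    exact (Fin.snoc_injective2 (eq_of_subsetSum_add_two_nsmul_eq hind (hb ▸ hb' ▸ heq))).1

end IsValuationOnUnits

end Valuation

theorem stmt_10_general (F Γ : Type*) [Field F]
    [AddCommGroup Γ] [LinearOrder Γ] [IsOrderedAddMonoid Γ] (v : F → Γ)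
    (hmul : ∀ x y : F, x ≠ 0 → y ≠ 0 → v (x * y) = v x + v y)
    (hadd : ∀ x y : F, x ≠ 0 → y ≠ 0 → x + y ≠ 0 → min (v x) (v y) ≤ v (x + y))
    (n : ℕ) (hn : 1 ≤ n) (α : Fin n → F) (hα0 : ∀ i, α i ≠ 0)
    (hneg : ∀ i, v (α i) < 0)
    (hind : ∀ c : Fin n → Bool, (∃ i, c i = true) →
      ∀ h : Γ, (∑ i, if c i then v (α i) else 0) ≠ 2 • h) :
    ∀ x : (Fin (n - 1) → Bool) → F × F, x ≠ 0 →
      qPf F (front α) (qlast α) x ≠ 0 := by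
  obtain ⟨m, rfl⟩ : ∃ m, n = m + 1 := ⟨n - 1, by omega⟩
  intro x hx
  have hlast : qlast α = α (Fin.last m) := dif_neg m.succ_ne_zero
  rw [hlast]
  exact IsValuationOnUnits.qPf_ne_zero ⟨hmul, hadd⟩ hα0 (hneg _) hind hx

/-- if `α₁,…,αₙ` have negative values whose classes in `Γ/2Γ` are
`𝔽₂`-independent, the quadratic `n`-fold Pfister form `⟨⟨α₁,…,α_{n-1},αₙ]]` is
anisotropic. -/
theorem stmt_10 (F Γ : Type*) [Field F] [CharP F 2]
    [AddCommGroup Γ] [LinearOrder Γ] [IsOrderedAddMonoid Γ] (v : F → Γ)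
    (hmul : ∀ x y : F, x ≠ 0 → y ≠ 0 → v (x * y) = v x + v y)
    (hadd : ∀ x y : F, x ≠ 0 → y ≠ 0 → x + y ≠ 0 → min (v x) (v y) ≤ v (x + y))
    (hsurj : ∀ g : Γ, ∃ x : F, x ≠ 0 ∧ v x = g)
    (n : ℕ) (hn : 1 ≤ n) (α : Fin n → F) (hα0 : ∀ i, α i ≠ 0)
    (hneg : ∀ i, v (α i) < 0)
    (hind : ∀ c : Fin n → Bool, (∃ i, c i = true) →
      ∀ h : Γ, (∑ i, if c i then v (α i) else 0) ≠ 2 • h) :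
    ∀ x : (Fin (n - 1) → Bool) → F × F, x ≠ 0 →
      qPf F (front α) (qlast α) x ≠ 0 :=
  stmt_10_general F Γ v hmul hadd n hn α hα0 hneg hind
end

section
/- With F, v, Γ, α₁,…,αₙ as above (values negative, classes independent in Γ/2Γ) and φ = ⟨⟨α₁,…,α_{n−1},αₙ]], the image v̄(D(φ)) of the nonzero value set of φ under F× → Γ/2Γ is exactly the 𝔽₂-subspace of Γ/2Γ spanned by v̄(α₁),…,v̄(αₙ). -/
/-!
Extend `v` by `⊤` at `0` to an additive valuation `w`. A vector `x = (aₑ, bₑ)ₑ` gives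
`φ(x) = ∑ₑ αᵉ (aₑ² + aₑ bₑ + αₙ bₑ²)`. Since `v(αₙ) < 0` and `v(αₙ) ∉ 2Γ`, the binary part has
value `min (2 v(aₑ)) (v(αₙ) + 2 v(bₑ))`, so every nonzero term has value in the class of
`∑_{i ∈ d} v(αᵢ)` for some `d ∈ {0,1}ⁿ` extending `e`. By independence these classes are distinct,
so the nonzero terms have pairwise distinct values and `v(φ(x))` is the value of one of them.
Conversely `αᵈ` is itself a value of `φ`.
-/

open Finset

section ValuationOfNeZero

variable {F Γ : Type*} [Field F] [AddCommGroup Γ] [LinearOrder Γ] [IsOrderedAddMonoid Γ]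

-- The hypotheses constrain `v` only on `Fˣ`; its junk value at `0` is replaced by `⊤`.
open Classical in
noncomputable def addValuationOfNeZero (v : F → Γ)
    (hmul : ∀ x y : F, x ≠ 0 → y ≠ 0 → v (x * y) = v x + v y)
    (hadd : ∀ x y : F, x ≠ 0 → y ≠ 0 → x + y ≠ 0 → min (v x) (v y) ≤ v (x + y)) :
    AddValuation F (WithTop Γ) :=
  AddValuation.of (fun x => if x = 0 then ⊤ else (v x : WithTop Γ)) (if_pos rfl)
    (by
      have h := hmul 1 1 one_ne_zero one_ne_zero
      rw [mul_one, left_eq_add] at h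
      simp [h])
    (fun x y => by
      by_cases hx : x = 0
      · simp [hx]
      by_cases hy : y = 0
      · simp [hy]
      by_cases hxy : x + y = 0
      · simp [hxy]
      simpa [hx, hy, hxy] using hadd x y hx hy hxy)
    (fun x y => by
      by_cases hx : x = 0
      · simp [hx]
      by_cases hy : y = 0
      · simp [hy]
      simp [hx, hy, hmul x y hx hy])

theorem addValuationOfNeZero_apply {v : F → Γ} {hmul hadd} {x : F} (hx : x ≠ 0) :
    addValuationOfNeZero v hmul hadd x = v x := by
  simp [addValuationOfNeZero, hx]

end ValuationOfNeZero

namespace AddValuation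

variable {R Γ₀ : Type*} [CommRing R] [LinearOrderedAddCommMonoidWithTop Γ₀] (w : AddValuation R Γ₀)

theorem exists_map_sum_eq {ι : Type*} {s : Finset ι} {f : ι → R} (hs : s.Nonempty)
    (hinj : ∀ i ∈ s, ∀ j ∈ s, w (f i) = w (f j) → w (f i) ≠ ⊤ → i = j) :
    ∃ j ∈ s, w (∑ i ∈ s, f i) = w (f j) := by
  classical
  obtain ⟨j, hj, hmin⟩ := s.exists_min_image (fun i => w (f i)) hs
  refine ⟨j, hj, ?_⟩
  by_cases htop : w (f j) = ⊤
  · exact le_antisymm (by simp [htop]) (w.map_le_sum fun i hi => hmin i hi)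
  have hlt : ∀ i ∈ s.erase j, w (f j) < w (f i) := fun i hi =>
    (hmin i (mem_of_mem_erase hi)).lt_of_ne
      fun h => ne_of_mem_erase hi (hinj j hj i (mem_of_mem_erase hi) h htop).symm
  rw [← add_sum_erase s f hj]
  exact w.map_add_eq_of_lt_left (w.map_lt_sum htop hlt)

theorem map_mono {n : ℕ} (β : Fin n → R) (d : Fin n → Bool) :
    w (mono β d) = ∑ i, if d i then w (β i) else 0 := by
  classical
  unfold mono
  induction (univ : Finset (Fin n)) using Finset.induction_on with
  | empty => simp
  | insert i s hi ih =>
    rw [prod_insert hi, sum_insert hi, w.map_mul, ih]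
    split_ifs <;> simp

end AddValuation

section BinaryForm

variable {F Γ : Type*} [Field F] [AddCommGroup Γ] [LinearOrder Γ] [IsOrderedAddMonoid Γ]

theorem min_two_nsmul_lt_add {a x y : Γ} (ha : a < 0) : min (2 • x) (a + 2 • y) < x + y := by
  by_contra! h
  have : (x + y) + (x + y) ≤ (x + y) + (x + y) + a :=
    calc (x + y) + (x + y) ≤ 2 • x + (a + 2 • y) :=
          add_le_add (h.trans (min_le_left _ _)) (h.trans (min_le_right _ _))
      _ = (x + y) + (x + y) + a := by abel
  exact this.not_gt (add_lt_of_neg_right _ ha)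

theorem AddValuation.map_sq_add_mul_add_mul_sq (w : AddValuation F (WithTop Γ)) {a : F}
    (ha : w a < 0) (hodd : ∀ g : Γ, w a ≠ ↑(2 • g)) (x y : F) :
    w (x ^ 2 + x * y + a * y ^ 2) = min (2 • w x) (w a + 2 • w y) := by
  by_cases hx : x = 0
  · simp [hx, w.map_pow, two_nsmul]
  by_cases hy : y = 0
  · simp [hy, w.map_pow, two_nsmul]
  obtain ⟨gx, hgx⟩ := WithTop.ne_top_iff_exists.mp ((w.ne_top_iff).mpr hx)
  obtain ⟨gy, hgy⟩ := WithTop.ne_top_iff_exists.mp ((w.ne_top_iff).mpr hy)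
  obtain ⟨ga, hga⟩ := WithTop.ne_top_iff_exists.mp ha.ne_top
  have hx2 : w (x ^ 2) = ↑(2 • gx) := by rw [w.map_pow, ← hgx]; norm_cast
  have hay2 : w (a * y ^ 2) = ↑(ga + 2 • gy) := by
    rw [w.map_mul, w.map_pow, ← hgy, ← hga]; norm_cast
  have hxy : w (x * y) = ↑(gx + gy) := by rw [w.map_mul, ← hgx, ← hgy]; norm_cast
  have hdiag : w (x ^ 2) ≠ w (a * y ^ 2) := by
    rw [hx2, hay2, WithTop.coe_eq_coe.ne]
    intro h
    apply hodd (gx - gy)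
    rw [← hga, smul_sub, h]
    simp
  have hcross : w (x ^ 2 + a * y ^ 2) < w (x * y) := by
    rw [w.map_add_of_distinct_val hdiag, hx2, hay2, hxy, ← WithTop.coe_min, WithTop.coe_lt_coe]
    exact min_two_nsmul_lt_add (by simpa [← hga] using ha)
  rw [add_right_comm, w.map_add_eq_of_lt_left hcross, w.map_add_of_distinct_val hdiag,
    w.map_pow, w.map_mul, w.map_pow]

end BinaryForm

section MaskSum

variable {ι Γ : Type*} [Fintype ι]

def maskSum [AddCommMonoid Γ] (A : ι → Γ) (c : ι → Bool) : Γ :=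
  ∑ i, if c i then A i else 0

theorem maskSum_add_maskSum [AddCommMonoid Γ] (A : ι → Γ) (c c' : ι → Bool) :
    maskSum A c + maskSum A c' =
      maskSum A (fun i => xor (c i) (c' i)) + 2 • maskSum A (fun i => c i && c' i) := by
  simp only [maskSum, smul_sum, ← sum_add_distrib]
  refine sum_congr rfl fun i _ => ?_
  rcases Bool.eq_false_or_eq_true (c i) with hc | hc <;>
    rcases Bool.eq_false_or_eq_true (c' i) with hc' | hc' <;> simp [hc, hc', two_nsmul]

theorem eq_of_maskSum_add_two_nsmul_eq [AddCommGroup Γ] {A : ι → Γ}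
    (hind : ∀ c : ι → Bool, (∃ i, c i = true) → ∀ h : Γ, maskSum A c ≠ 2 • h)
    {c c' : ι → Bool} {g g' : Γ} (h : maskSum A c + 2 • g = maskSum A c' + 2 • g') :
    c = c' := by
  by_contra hne
  obtain ⟨i, hi⟩ := Function.ne_iff.mp hne
  refine hind (fun i => xor (c i) (c' i)) ⟨i, by simpa using hi⟩
    (maskSum A c' + g' - g - maskSum A (fun i => c i && c' i)) ?_
  calc maskSum A (fun i => xor (c i) (c' i))
      = maskSum A c + maskSum A c' - 2 • maskSum A (fun i => c i && c' i) :=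
        eq_sub_of_add_eq (maskSum_add_maskSum A c c').symm
    _ = (maskSum A c + 2 • g) + maskSum A c' - 2 • g
          - 2 • maskSum A (fun i => c i && c' i) := by abel
    _ = 2 • (maskSum A c' + g' - g - maskSum A (fun i => c i && c' i)) := by
        rw [h]; abel

end MaskSum

section Pfister

theorem qlast_succ {R : Type*} [CommRing R] {m : ℕ} (α : Fin (m + 1) → R) :
    qlast α = α (Fin.last m) :=
  dif_neg m.succ_ne_zero

theorem mono_snoc {R : Type*} [CommRing R] {m : ℕ} (α : Fin (m + 1) → R) (e : Fin m → Bool)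
    (t : Bool) :
    mono α (Fin.snoc e t) = mono (Fin.init α) e * if t then α (Fin.last m) else 1 := by
  simp [mono, Fin.prod_univ_castSucc, Fin.init]

theorem exists_qPf_eq_mono {R : Type*} [CommRing R] {m : ℕ} (α : Fin (m + 1) → R)
    (c : Fin (m + 1) → Bool) : ∃ x, qPf R (Fin.init α) (α (Fin.last m)) x = mono α c := by
  refine ⟨Pi.single (Fin.init c) (if c (Fin.last m) then (0, 1) else (1, 0)), ?_⟩
  rw [qPf, sum_eq_single (Fin.init c) (fun e _ he => by simp [he]) (by simp)]
  conv_rhs => rw [← Fin.snoc_init_self c, mono_snoc]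
  cases c (Fin.last m) <;> simp

variable {F Γ : Type*} [Field F] [AddCommGroup Γ] [LinearOrder Γ] [IsOrderedAddMonoid Γ]
  (w : AddValuation F (WithTop Γ))

theorem AddValuation.map_mono_eq_maskSum {n : ℕ} {α : Fin n → F} {A : Fin n → Γ}
    (hA : ∀ i, w (α i) = A i) (c : Fin n → Bool) : w (mono α c) = ↑(maskSum A c) := by
  rw [w.map_mono, maskSum, WithTop.coe_sum]
  refine sum_congr rfl fun i _ => ?_
  split_ifs <;> simp [hA]

variable {m : ℕ} {α : Fin (m + 1) → F} {A : Fin (m + 1) → Γ}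

theorem AddValuation.exists_map_qPf_term_eq (hA : ∀ i, w (α i) = A i)
    (hneg : A (Fin.last m) < 0) (hodd : ∀ g : Γ, A (Fin.last m) ≠ 2 • g)
    (e : Fin m → Bool) (p : F × F)
    (hp : w (mono (Fin.init α) e * (p.1 ^ 2 + p.1 * p.2 + α (Fin.last m) * p.2 ^ 2)) ≠ ⊤) :
    ∃ t : Bool, ∃ h : Γ, w (mono (Fin.init α) e *
      (p.1 ^ 2 + p.1 * p.2 + α (Fin.last m) * p.2 ^ 2)) = ↑(maskSum A (Fin.snoc e t) + 2 • h) := by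
  have hsnoc : ∀ t, w (mono (Fin.init α) e) + (if t then w (α (Fin.last m)) else 0) =
      ↑(maskSum A (Fin.snoc e t)) := fun t => by
    rw [← w.map_mono_eq_maskSum hA, mono_snoc, w.map_mul]
    cases t <;> simp
  rw [w.map_mul, w.map_sq_add_mul_add_mul_sq (by simpa [hA] using hneg)
    (fun g => by rw [hA]; exact_mod_cast hodd g)] at hp ⊢
  rcases min_choice (2 • w p.1) (w (α (Fin.last m)) + 2 • w p.2) with hmin | hmin <;>
    rw [hmin] at hp ⊢
  · obtain ⟨g, hg⟩ : ∃ g : Γ, ↑g = w p.1 :=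
      WithTop.ne_top_iff_exists.mp fun htop => hp (by rw [htop, two_nsmul]; simp)
    refine ⟨false, g, ?_⟩
    rw [WithTop.coe_add, ← hsnoc, ← hg]
    simp
  · obtain ⟨g, hg⟩ : ∃ g : Γ, ↑g = w p.2 :=
      WithTop.ne_top_iff_exists.mp fun htop => hp (by rw [htop, two_nsmul]; simp)
    refine ⟨true, g, ?_⟩
    rw [WithTop.coe_add, ← hsnoc, ← hg]
    simp [add_assoc]

theorem AddValuation.exists_map_qPf_eq_maskSum (hA : ∀ i, w (α i) = A i)
    (hneg : A (Fin.last m) < 0)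
    (hind : ∀ c : Fin (m + 1) → Bool, (∃ i, c i = true) → ∀ h : Γ, maskSum A c ≠ 2 • h)
    (x : (Fin m → Bool) → F × F) (hx : w (qPf F (Fin.init α) (α (Fin.last m)) x) ≠ ⊤) :
    ∃ c : Fin (m + 1) → Bool, ∃ h : Γ,
      w (qPf F (Fin.init α) (α (Fin.last m)) x) = ↑(maskSum A c + 2 • h) := by
  have hodd : ∀ g : Γ, A (Fin.last m) ≠ 2 • g := fun g =>
    by simpa [maskSum] using hind (fun i => decide (i = Fin.last m)) ⟨Fin.last m, by simp⟩ g
  have hterm := w.exists_map_qPf_term_eq hA hneg hodd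
  -- distinct terms of `φ(x)` have values in distinct classes of `Γ/2Γ`, hence distinct values
  obtain ⟨e, -, he⟩ := w.exists_map_sum_eq (s := univ) univ_nonempty fun e _ e' _ hee' hfin => by
    obtain ⟨t, h, ht⟩ := hterm e (x e) hfin
    obtain ⟨t', h', ht'⟩ := hterm e' (x e') (hee' ▸ hfin)
    have := eq_of_maskSum_add_two_nsmul_eq hind
      (WithTop.coe_injective (ht.symm.trans (hee'.trans ht')))
    simpa using congrArg Fin.init this
  rw [qPf, he] at hx ⊢
  obtain ⟨t, h, ht⟩ := hterm e (x e) hx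
  exact ⟨Fin.snoc e t, h, ht⟩

end Pfister

theorem stmt_11_general (F Γ : Type*) [Field F]
    [AddCommGroup Γ] [LinearOrder Γ] [IsOrderedAddMonoid Γ] (v : F → Γ)
    (hmul : ∀ x y : F, x ≠ 0 → y ≠ 0 → v (x * y) = v x + v y)
    (hadd : ∀ x y : F, x ≠ 0 → y ≠ 0 → x + y ≠ 0 → min (v x) (v y) ≤ v (x + y))
    (n : ℕ) (hn : 1 ≤ n) (α : Fin n → F) (hα0 : ∀ i, α i ≠ 0)
    (hneg : ∀ i, v (α i) < 0)
    (hind : ∀ c : Fin n → Bool, (∃ i, c i = true) →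
      ∀ h : Γ, (∑ i, if c i then v (α i) else 0) ≠ 2 • h) :
    (∀ x : (Fin (n - 1) → Bool) → F × F, qPf F (front α) (qlast α) x ≠ 0 →
      ∃ c : Fin n → Bool, ∃ h : Γ,
        v (qPf F (front α) (qlast α) x) = (∑ i, if c i then v (α i) else 0) + 2 • h) ∧
    (∀ c : Fin n → Bool, ∃ x : (Fin (n - 1) → Bool) → F × F,
      qPf F (front α) (qlast α) x ≠ 0 ∧ ∃ h : Γ,
        v (qPf F (front α) (qlast α) x) = (∑ i, if c i then v (α i) else 0) + 2 • h) := by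
  obtain ⟨m, rfl⟩ : ∃ m, n = m + 1 := ⟨n - 1, by omega⟩
  set w := addValuationOfNeZero v hmul hadd
  have hA : ∀ i, w (α i) = v (α i) := fun i => addValuationOfNeZero_apply (hα0 i)
  rw [qlast_succ, show qPf F (front α) = qPf F (Fin.init α) from rfl]
  refine ⟨fun x hx => ?_, fun c => ?_⟩
  · obtain ⟨c, h, hc⟩ := w.exists_map_qPf_eq_maskSum hA (hneg _) hind x (w.ne_top_iff.mpr hx)
    exact ⟨c, h, WithTop.coe_injective (by rw [← addValuationOfNeZero_apply hx]; exact hc)⟩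
  · obtain ⟨x, hx⟩ := exists_qPf_eq_mono α c
    have hc := w.map_mono_eq_maskSum hA c
    have hne : mono α c ≠ 0 := w.ne_top_iff.mp (by simp [hc])
    refine ⟨x, hx ▸ hne, 0, ?_⟩
    rw [hx, smul_zero, add_zero]
    exact WithTop.coe_injective (by rw [← addValuationOfNeZero_apply hne]; exact hc)

/-- under the same hypotheses, the image of the nonzero value set
`D(φ)` of `φ = ⟨⟨α₁,…,α_{n-1},αₙ]]` in `Γ/2Γ` is exactly the `𝔽₂`-span of the
classes of `v(α₁),…,v(αₙ)` (an element of `Γ` lies in the span iff it is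
`∑_{i ∈ c} v(αᵢ) + 2h` for some `c : {0,1}ⁿ`, `h ∈ Γ`). -/
theorem stmt_11 (F Γ : Type*) [Field F] [CharP F 2]
    [AddCommGroup Γ] [LinearOrder Γ] [IsOrderedAddMonoid Γ] (v : F → Γ)
    (hmul : ∀ x y : F, x ≠ 0 → y ≠ 0 → v (x * y) = v x + v y)
    (hadd : ∀ x y : F, x ≠ 0 → y ≠ 0 → x + y ≠ 0 → min (v x) (v y) ≤ v (x + y))
    (hsurj : ∀ g : Γ, ∃ x : F, x ≠ 0 ∧ v x = g)
    (n : ℕ) (hn : 1 ≤ n) (α : Fin n → F) (hα0 : ∀ i, α i ≠ 0)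
    (hneg : ∀ i, v (α i) < 0)
    (hind : ∀ c : Fin n → Bool, (∃ i, c i = true) →
      ∀ h : Γ, (∑ i, if c i then v (α i) else 0) ≠ 2 • h) :
    (∀ x : (Fin (n - 1) → Bool) → F × F, qPf F (front α) (qlast α) x ≠ 0 →
      ∃ c : Fin n → Bool, ∃ h : Γ,
        v (qPf F (front α) (qlast α) x) = (∑ i, if c i then v (α i) else 0) + 2 • h) ∧
    (∀ c : Fin n → Bool, ∃ x : (Fin (n - 1) → Bool) → F × F,
      qPf F (front α) (qlast α) x ≠ 0 ∧ ∃ h : Γ,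
        v (qPf F (front α) (qlast α) x) = (∑ i, if c i then v (α i) else 0) + 2 • h) :=
  stmt_11_general F Γ v hmul hadd n hn α hα0 hneg hind
end

section
/- Let φ be an anisotropic quadratic n-fold Pfister form over a field F of characteristic 2 and γ ∈ F× a nonsquare. If φ becomes isotropic over the inseparable quadratic extension K = F(√γ), then the diagonal quadratic form ⟨1, γ⟩ (i.e. x² + γy²) is a subform of the pure part φ' of φ. -/
/-!
Write an isotropic vector of `φ` over `K = F(√γ)` as `y + √γ z` with `y, z` defined over `F`.
Comparing the two components gives `φ(y) = γ φ(z)` and `b(y, z) = 0` for the polar form `b`,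
and `z ≠ 0` by anisotropy. Pfister forms are round: every value `φ(z)` is a similarity factor
of `φ` (induction on the fold, writing `φ = ψ ⊥ β₀ ψ`). A similarity with factor `φ(z)⁻¹` turns
`(z, y)` into an orthogonal pair `(z', y')` with values `1` and `γ`. The pure part `φ'` is the
orthogonal complement of the unit vector `1`, and the reflection along `z' + 1` is an isometry
sending `z'` to `1`; it therefore sends `y'` to a vector of value `γ` orthogonal to `1`, i.e.
lying in `φ'`.
-/

abbrev PfisterSpace (R : Type*) (m : ℕ) := (Fin m → Bool) → R × R

section Polar

variable {R : Type*} [CommRing R] {m : ℕ} (β : Fin m → R) (a : R)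

def qPfPolar (x y : PfisterSpace R m) : R :=
  ∑ d, mono β d * ((x d).1 * (y d).2 + (x d).2 * (y d).1)

lemma qPf_smul (s : R) (x : PfisterSpace R m) : qPf R β a (s • x) = s ^ 2 * qPf R β a x := by
  simp only [qPf, Finset.mul_sum]
  refine Finset.sum_congr rfl fun d _ => ?_
  simp only [Pi.smul_apply, Prod.smul_fst, Prod.smul_snd, smul_eq_mul]
  ring

lemma qPfPolar_comm (x y : PfisterSpace R m) : qPfPolar β x y = qPfPolar β y x :=
  Finset.sum_congr rfl fun _ _ => by ring

lemma qPfPolar_add_right (x y z : PfisterSpace R m) :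
    qPfPolar β x (y + z) = qPfPolar β x y + qPfPolar β x z := by
  simp only [qPfPolar, ← Finset.sum_add_distrib]
  refine Finset.sum_congr rfl fun d _ => ?_
  simp only [Pi.add_apply, Prod.fst_add, Prod.snd_add]
  ring

lemma qPfPolar_smul_right (s : R) (x y : PfisterSpace R m) :
    qPfPolar β x (s • y) = s * qPfPolar β x y := by
  simp only [qPfPolar, Finset.mul_sum]
  refine Finset.sum_congr rfl fun d _ => ?_
  simp only [Pi.smul_apply, Prod.smul_fst, Prod.smul_snd, smul_eq_mul]
  ring

lemma qPfPolar_add_left (x y z : PfisterSpace R m) :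
    qPfPolar β (x + y) z = qPfPolar β x z + qPfPolar β y z := by
  rw [qPfPolar_comm, qPfPolar_add_right, qPfPolar_comm β z, qPfPolar_comm β z]

lemma qPfPolar_smul_left (s : R) (x y : PfisterSpace R m) :
    qPfPolar β (s • x) y = s * qPfPolar β x y := by
  rw [qPfPolar_comm, qPfPolar_smul_right, qPfPolar_comm]

lemma mono_map {S : Type*} [CommRing S] (f : R →+* S) (d : Fin m → Bool) :
    mono (f ∘ β) d = f (mono β d) := by
  simp only [mono, map_prod, Function.comp_apply, apply_ite f, map_one]

lemma qPf_map {S : Type*} [CommRing S] (f : R →+* S) (x : PfisterSpace R m) :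
    qPf S (f ∘ β) (f a) (Prod.map f f ∘ x) = f (qPf R β a x) := by
  simp [qPf, mono_map]

lemma qPfPolar_map {S : Type*} [CommRing S] (f : R →+* S) (x y : PfisterSpace R m) :
    qPfPolar (f ∘ β) (Prod.map f f ∘ x) (Prod.map f f ∘ y) = f (qPfPolar β x y) := by
  simp [qPfPolar, mono_map]

variable [CharP R 2]

lemma qPf_add (x y : PfisterSpace R m) :
    qPf R β a (x + y) = qPf R β a x + qPf R β a y + qPfPolar β x y := by
  simp only [qPf, qPfPolar, ← Finset.sum_add_distrib]
  refine Finset.sum_congr rfl fun d _ => ?_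
  simp only [Pi.add_apply, Prod.fst_add, Prod.snd_add]
  linear_combination (mono β d * ((x d).1 * (y d).1 + a * (x d).2 * (y d).2)) *
    CharTwo.two_eq_zero (R := R)

lemma qPf_smul_add_smul (s t : R) (x y : PfisterSpace R m) :
    qPf R β a (s • x + t • y) = s ^ 2 * qPf R β a x + t ^ 2 * qPf R β a y
      + s * t * qPfPolar β x y := by
  rw [qPf_add, qPf_smul, qPf_smul, qPfPolar_smul_left, qPfPolar_smul_right, mul_assoc]

lemma qPfPolar_self (x : PfisterSpace R m) : qPfPolar β x x = 0 := by
  simp only [qPfPolar]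
  refine Finset.sum_eq_zero fun d _ => ?_
  linear_combination (mono β d * (x d).1 * (x d).2) * CharTwo.two_eq_zero (R := R)

end Polar

section Split

variable {R : Type*} [CommRing R] {m : ℕ}

def splitHead : PfisterSpace R (m + 1) ≃ₗ[R] PfisterSpace R m × PfisterSpace R m where
  toFun x := (fun d => x (Fin.cons false d), fun d => x (Fin.cons true d))
  invFun p d := bif d 0 then p.2 (Fin.tail d) else p.1 (Fin.tail d)
  map_add' _ _ := rfl
  map_smul' _ _ := rfl
  left_inv x := by
    funext d
    rw [← Fin.cons_self_tail d]
    cases d 0 <;> simp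
  right_inv p := by ext d <;> simp

lemma qPf_splitHead (β : Fin (m + 1) → R) (a : R) (x : PfisterSpace R (m + 1)) :
    qPf R β a x = qPf R (Fin.tail β) a (splitHead x).1
      + β 0 * qPf R (Fin.tail β) a (splitHead x).2 := by
  rw [qPf, ← (Fin.consEquiv fun _ => Bool).sum_comp, Fintype.sum_prod_type, Fintype.sum_bool,
    add_comm]
  simp [qPf, splitHead, mono, Fin.consEquiv, Fin.prod_univ_succ, Finset.mul_sum, Fin.tail,
    mul_assoc]

lemma qPf_fin_zero (β : Fin 0 → R) (a : R) (x : PfisterSpace R 0) :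
    qPf R β a x = (x fun _ => false).1 ^ 2 + (x fun _ => false).1 * (x fun _ => false).2
      + a * (x fun _ => false).2 ^ 2 := by
  rw [qPf, Fintype.sum_eq_single (fun _ => false) fun d hd => absurd (Subsingleton.elim d _) hd]
  simp [mono]

end Split

section Similarity

variable {F : Type*} [Field F] {m : ℕ}

def IsSimilarityFactor (β : Fin m → F) (a c : F) : Prop :=
  ∃ e : PfisterSpace F m →ₗ[F] PfisterSpace F m, ∀ x, qPf F β a (e x) = c * qPf F β a x

lemma isSimilarityFactor_sq (β : Fin m → F) (a s : F) : IsSimilarityFactor β a (s ^ 2) :=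
  ⟨s • LinearMap.id, fun x => by rw [LinearMap.smul_apply, LinearMap.id_apply, qPf_smul]⟩

namespace IsSimilarityFactor

variable {β : Fin m → F} {a c d : F}

lemma mul (hc : IsSimilarityFactor β a c) (hd : IsSimilarityFactor β a d) :
    IsSimilarityFactor β a (c * d) := by
  obtain ⟨e, he⟩ := hc
  obtain ⟨f, hf⟩ := hd
  exact ⟨e ∘ₗ f, fun x => by rw [LinearMap.comp_apply, he, hf, mul_assoc]⟩

lemma inv (hc : IsSimilarityFactor β a c) : IsSimilarityFactor β a c⁻¹ := by
  have hinv : c * c⁻¹ ^ 2 = c⁻¹ := by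
    rcases eq_or_ne c 0 with rfl | hc0
    · simp
    · field_simp
  exact hinv ▸ hc.mul (isSimilarityFactor_sq β a c⁻¹)

end IsSimilarityFactor

lemma qPfPolar_map_of_similar [CharP F 2] {β : Fin m → F} {a c : F}
    {e : PfisterSpace F m →ₗ[F] PfisterSpace F m}
    (he : ∀ x, qPf F β a (e x) = c * qPf F β a x) (x y : PfisterSpace F m) :
    qPfPolar β (e x) (e y) = c * qPfPolar β x y := by
  have h := he (x + y)
  rw [map_add, qPf_add, qPf_add, he, he] at h
  linear_combination h

end Similarity

section Roundness

variable {F : Type*} [Field F] {m : ℕ}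

namespace IsSimilarityFactor

variable {β : Fin (m + 1) → F} {a c d : F}

local notation "ψ" => qPf F (Fin.tail β) a

lemma of_splitHead
    (T : PfisterSpace F m × PfisterSpace F m →ₗ[F] PfisterSpace F m × PfisterSpace F m)
    (hT : ∀ p, ψ (T p).1 + β 0 * ψ (T p).2 = c * (ψ p.1 + β 0 * ψ p.2)) :
    IsSimilarityFactor β a c :=
  ⟨splitHead.symm.toLinearMap ∘ₗ T ∘ₗ splitHead.toLinearMap, fun x => by
    simp [qPf_splitHead β, hT]⟩

lemma of_tail (hc : IsSimilarityFactor (Fin.tail β) a c) : IsSimilarityFactor β a c := by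
  obtain ⟨e, he⟩ := hc
  exact of_splitHead (e.prodMap e) fun p => by
    simp only [LinearMap.prodMap_apply, he]; ring

lemma head : IsSimilarityFactor β a (β 0) :=
  of_splitHead ((β 0 • LinearMap.snd F _ _).prod (LinearMap.fst F _ _)) fun p => by
    change ψ (β 0 • p.2) + β 0 * ψ p.1 = _
    rw [qPf_smul]; ring

lemma one_add_head_mul [CharP F 2] (hd : IsSimilarityFactor (Fin.tail β) a d) (hd0 : d ≠ 0) :
    IsSimilarityFactor β a (1 + β 0 * d) := by
  obtain ⟨e', he'⟩ := hd.inv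
  obtain ⟨e, he⟩ := hd
  refine of_splitHead ((LinearMap.fst F _ _ + (β 0 * d) • e' ∘ₗ LinearMap.snd F _ _).prod
    (e ∘ₗ (LinearMap.fst F _ _ + e' ∘ₗ LinearMap.snd F _ _))) fun p => ?_
  change ψ (p.1 + (β 0 * d) • e' p.2) + β 0 * ψ (e (p.1 + e' p.2)) = _
  rw [he, qPf_add, qPf_add, qPf_smul, qPfPolar_smul_right, he']
  -- the two cross terms `β₀ d b(p₁, e' p₂)` cancel in characteristic 2
  have hdd : d * d⁻¹ = 1 := mul_inv_cancel₀ hd0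
  linear_combination (β 0 * ψ p.2 * (β 0 * d + 1)) * hdd
    + (β 0 * d * qPfPolar (Fin.tail β) p.1 (e' p.2)) * CharTwo.two_eq_zero (R := F)

lemma add_head_mul [CharP F 2] (hc : IsSimilarityFactor (Fin.tail β) a c)
    (hd : IsSimilarityFactor (Fin.tail β) a d) : IsSimilarityFactor β a (c + β 0 * d) := by
  rcases eq_or_ne c 0 with rfl | hc0
  · simpa using head.mul hd.of_tail
  rcases eq_or_ne d 0 with rfl | hd0
  · simpa using hc.of_tail
  have hsplit : c + β 0 * d = c * (1 + β 0 * (d * c⁻¹)) := by field_simp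
  rw [hsplit]
  exact hc.of_tail.mul ((hd.mul hc.inv).one_add_head_mul (mul_ne_zero hd0 (inv_ne_zero hc0)))

end IsSimilarityFactor

-- For `m = 0`, `qPf` is the norm form of `F[ω]/(ω² + ω + a)`, and multiplication by
-- `P + Q ω` multiplies it by the norm of `P + Q ω`.
lemma isSimilarityFactor_qPf_fin_zero [CharP F 2] (β : Fin 0 → F) (a : F)
    (y : PfisterSpace F 0) : IsSimilarityFactor β a (qPf F β a y) := by
  set P := (y fun _ => false).1
  set Q := (y fun _ => false).2
  let L : F × F →ₗ[F] F × F :=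
    (P • LinearMap.fst F F F + (a * Q) • LinearMap.snd F F F).prod
      (Q • LinearMap.fst F F F + (P + Q) • LinearMap.snd F F F)
  refine ⟨L.compLeft _, fun x => ?_⟩
  set r := (x fun _ => false).1
  set s := (x fun _ => false).2
  have hL (v : F × F) : L v = (P * v.1 + a * Q * v.2, Q * v.1 + (P + Q) * v.2) := rfl
  simp only [qPf_fin_zero, LinearMap.compLeft_apply, Function.comp_apply, hL]
  linear_combination (a * Q ^ 2 * s ^ 2 + a * Q ^ 2 * r * s + a * P * Q * s ^ 2
    + 2 * a * P * Q * r * s) * CharTwo.two_eq_zero (R := F)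

theorem isSimilarityFactor_qPf [CharP F 2] :
    ∀ {m : ℕ} (β : Fin m → F) (a : F) (x : PfisterSpace F m),
      IsSimilarityFactor β a (qPf F β a x)
  | 0, β, a, x => isSimilarityFactor_qPf_fin_zero β a x
  | _ + 1, β, a, x => by
    rw [qPf_splitHead]
    exact (isSimilarityFactor_qPf _ a _).add_head_mul (isSimilarityFactor_qPf _ a _)

end Roundness

section Reflection

variable {F : Type*} [Field F] [CharP F 2] {m : ℕ} (β : Fin m → F) (a : F)

-- When `qPf v = 0`, the junk value `_ / 0 = 0` makes this the identity.
def qPfReflect (v x : PfisterSpace F m) : PfisterSpace F m :=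
  x + (qPfPolar β x v / qPf F β a v) • v

lemma qPf_qPfReflect (v x : PfisterSpace F m) :
    qPf F β a (qPfReflect β a v x) = qPf F β a x := by
  rcases eq_or_ne (qPf F β a v) 0 with hv | hv
  · simp [qPfReflect, hv]
  rw [qPfReflect, qPf_add, qPf_smul, qPfPolar_smul_right]
  field_simp
  linear_combination qPfPolar β x v ^ 2 * CharTwo.two_eq_zero (R := F)

lemma qPfPolar_qPfReflect (v x y : PfisterSpace F m) :
    qPfPolar β (qPfReflect β a v x) (qPfReflect β a v y) = qPfPolar β x y := by
  simp only [qPfReflect, qPfPolar_add_left, qPfPolar_add_right, qPfPolar_smul_left,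
    qPfPolar_smul_right, qPfPolar_self, qPfPolar_comm β v y]
  linear_combination
    (qPfPolar β x v / qPf F β a v * qPfPolar β y v) * CharTwo.two_eq_zero (R := F)

lemma qPfReflect_add_of_qPf_eq (haniso : ∀ x, x ≠ 0 → qPf F β a x ≠ 0)
    {x y : PfisterSpace F m} (h : qPf F β a x = qPf F β a y) : qPfReflect β a (x + y) x = y := by
  have hxx : x + x = 0 := by rw [← two_smul F x, CharTwo.two_eq_zero, zero_smul]
  have hxy : qPf F β a (x + y) = qPfPolar β x y := by
    rw [qPf_add, h]; linear_combination qPf F β a y * CharTwo.two_eq_zero (R := F)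
  rcases eq_or_ne (qPfPolar β x y) 0 with h0 | h0
  · have : x + y = 0 := by_contra fun hne => haniso _ hne (hxy.trans h0)
    rw [qPfReflect, this, smul_zero, add_zero]
    exact add_left_cancel (hxx.trans this.symm)
  · rw [qPfReflect, hxy, qPfPolar_add_right, qPfPolar_self, zero_add, div_self h0, one_smul,
      ← add_assoc, hxx, zero_add]

end Reflection

section PureSubspace

variable {F : Type*} [Field F] {m : ℕ} (β : Fin m → F) (a : F)

-- By `qPfPolar_pfisterOne_left`, the pure part `φ'` is the orthogonal complement of this vector.
def pfisterOne : PfisterSpace F m := Pi.single (fun _ => false) (1, 0)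

lemma qPf_pfisterOne : qPf F β a pfisterOne = 1 := by
  rw [qPf, Fintype.sum_eq_single (fun _ => false) fun d hd => by simp [pfisterOne, hd]]
  simp [pfisterOne, mono]

lemma qPfPolar_pfisterOne_left (w : PfisterSpace F m) :
    qPfPolar β pfisterOne w = (w fun _ => false).2 := by
  rw [qPfPolar, Fintype.sum_eq_single (fun _ => false) fun d hd => by simp [pfisterOne, hd]]
  simp [pfisterOne, mono]

end PureSubspace

section AdjoinRoot

open Polynomial

variable {F : Type*} [Field F] (γ : F)

local notation "K" => AdjoinRoot (X ^ 2 - C γ)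
local notation "θ" => AdjoinRoot.root (X ^ 2 - C γ)
local notation "ι" => algebraMap F K

instance : Nontrivial K :=
  AdjoinRoot.nontrivial _ (by rw [degree_X_pow_sub_C two_pos]; decide)

instance [CharP F 2] : CharP K 2 :=
  charP_of_injective_algebraMap (algebraMap F _).injective 2

lemma AdjoinRoot.root_X_sq_sub_C_sq : θ ^ 2 = ι γ := by
  have h := AdjoinRoot.mk_self (f := X ^ 2 - C γ)
  rwa [map_sub, map_pow, AdjoinRoot.mk_X, AdjoinRoot.mk_C, sub_eq_zero] at h

lemma AdjoinRoot.exists_algebraMap_add_mul_root (u : K) : ∃ A B : F, ι A + ι B * θ = u := by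
  obtain ⟨f, hf, rfl⟩ :=
    (AdjoinRoot.powerBasis' (monic_X_pow_sub_C γ two_ne_zero)).exists_eq_aeval u
  simp only [AdjoinRoot.powerBasis'_dim, natDegree_X_pow_sub_C, AdjoinRoot.powerBasis'_gen]
    at hf ⊢
  refine ⟨f.coeff 0, f.coeff 1, ?_⟩
  conv_rhs => rw [eq_X_add_C_of_natDegree_le_one (Nat.le_of_lt_succ hf)]
  rw [map_add, map_mul, aeval_C, aeval_C, aeval_X, add_comm]

lemma AdjoinRoot.eq_zero_of_algebraMap_add_mul_root_eq_zero {A B : F} (h : ι A + ι B * θ = 0) :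
    A = 0 ∧ B = 0 := by
  have hmk : AdjoinRoot.mk (X ^ 2 - C γ) (C B * X + C A) = 0 := by
    rw [← h, map_add, map_mul, AdjoinRoot.mk_C, AdjoinRoot.mk_C, AdjoinRoot.mk_X,
      AdjoinRoot.algebraMap_eq, add_comm, mul_comm]
  rw [AdjoinRoot.mk_eq_zero] at hmk
  have h0 := eq_zero_of_dvd_of_natDegree_lt hmk (by
    rw [natDegree_X_pow_sub_C]; exact natDegree_linear_le.trans_lt one_lt_two)
  exact ⟨by simpa using congrArg (coeff · 0) h0, by simpa using congrArg (coeff · 1) h0⟩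

variable [CharP F 2] {m : ℕ} (β : Fin m → F) (a : F)

lemma qPf_adjoinRoot (y z : PfisterSpace F m) :
    qPf K (ι ∘ β) (ι a) (Prod.map ι ι ∘ y + θ • Prod.map ι ι ∘ z)
      = ι (qPf F β a y + γ * qPf F β a z) + ι (qPfPolar β y z) * θ := by
  rw [qPf_add, qPf_smul, qPfPolar_smul_right, qPf_map, qPf_map, qPfPolar_map,
    AdjoinRoot.root_X_sq_sub_C_sq]
  simp only [map_add, map_mul]
  ring

lemma exists_of_isotropic_adjoinRoot (haniso : ∀ x, x ≠ 0 → qPf F β a x ≠ 0)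
    {x : PfisterSpace K m} (hx : x ≠ 0) (hq : qPf K (fun i => ι (β i)) (ι a) x = 0) :
    ∃ y z : PfisterSpace F m,
      z ≠ 0 ∧ qPf F β a y = γ * qPf F β a z ∧ qPfPolar β y z = 0 := by
  choose A B hAB using AdjoinRoot.exists_algebraMap_add_mul_root γ
  set y : PfisterSpace F m := Prod.map A A ∘ x
  set z : PfisterSpace F m := Prod.map B B ∘ x
  have hxyz : x = Prod.map ι ι ∘ y + θ • Prod.map ι ι ∘ z := by
    ext d <;>
    simp only [Pi.add_apply, Pi.smul_apply, Function.comp_apply, Prod.map_fst, Prod.map_snd,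
      Prod.fst_add, Prod.snd_add, Prod.smul_fst, Prod.smul_snd, smul_eq_mul, y, z,
      mul_comm _ (ι _), hAB]
  rw [hxyz, show (fun i => ι (β i)) = ι ∘ β from rfl, qPf_adjoinRoot] at hq
  obtain ⟨hyz, hpolar⟩ := AdjoinRoot.eq_zero_of_algebraMap_add_mul_root_eq_zero γ hq
  rw [CharTwo.add_eq_zero] at hyz
  refine ⟨y, z, fun hz => hx ?_, hyz, hpolar⟩
  have hy : y = 0 := by_contra fun hy => haniso y hy (by rw [hyz, hz]; simp [qPf])
  rw [hxyz, hy, hz]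
  ext <;> simp

end AdjoinRoot

theorem stmt_14_general (F : Type*) [Field F] [CharP F 2] (n : ℕ)
    (β : Fin (n - 1) → F) (a : F)
    (haniso : ∀ x : (Fin (n - 1) → Bool) → F × F, x ≠ 0 → qPf F β a x ≠ 0)
    (γ : F)
    (hiso : ∃ x : (Fin (n - 1) → Bool) →
        AdjoinRoot (Polynomial.X ^ 2 - Polynomial.C γ) ×
          AdjoinRoot (Polynomial.X ^ 2 - Polynomial.C γ),
      x ≠ 0 ∧
        qPf (AdjoinRoot (Polynomial.X ^ 2 - Polynomial.C γ))
          (fun i => algebraMap F _ (β i)) (algebraMap F _ a) x = 0) :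
    ∃ u w : (Fin (n - 1) → Bool) → F × F,
      (u fun _ => false).2 = 0 ∧ (w fun _ => false).2 = 0 ∧
        ∀ s t : F, qPf F β a (s • u + t • w) = s ^ 2 + γ * t ^ 2 := by
  obtain ⟨x, hx, hq⟩ := hiso
  obtain ⟨y, z, hz, hyz, hpolar⟩ := exists_of_isotropic_adjoinRoot γ β a haniso hx hq
  obtain ⟨e, he⟩ := (isSimilarityFactor_qPf β a z).inv
  have hez : qPf F β a (e z) = qPf F β a pfisterOne := by
    rw [he, qPf_pfisterOne, inv_mul_cancel₀ (haniso z hz)]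
  set w := qPfReflect β a (e z + pfisterOne) (e y)
  have hw : qPf F β a w = γ := by
    rw [qPf_qPfReflect, he, hyz]
    field_simp [haniso z hz]
  have hpure : qPfPolar β pfisterOne w = 0 := by
    rw [← qPfReflect_add_of_qPf_eq β a haniso hez, qPfPolar_qPfReflect,
      qPfPolar_map_of_similar he, qPfPolar_comm, hpolar, mul_zero]
  refine ⟨pfisterOne, w, by simp [pfisterOne], by rwa [← qPfPolar_pfisterOne_left β],
    fun s t => ?_⟩
  rw [qPf_smul_add_smul, qPf_pfisterOne, hw, hpure]
  ring

/-- if the anisotropic quadratic `n`-fold Pfister form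
`φ = ⟨⟨β₁,…,β_{n-1},a]]` becomes isotropic over the inseparable quadratic
extension `K = F(√γ) = F[t]/(t²-γ)` (`γ` a nonsquare), then `⟨1,γ⟩` is a subform
of the pure part `φ'`. -/
theorem stmt_14 (F : Type*) [Field F] [CharP F 2] (n : ℕ) (hn : 1 ≤ n)
    (β : Fin (n - 1) → F) (hβ : ∀ i, β i ≠ 0) (a : F)
    (haniso : ∀ x : (Fin (n - 1) → Bool) → F × F, x ≠ 0 → qPf F β a x ≠ 0)
    (γ : F) (hγ : ¬ ∃ s : F, s ^ 2 = γ)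
    (hiso : ∃ x : (Fin (n - 1) → Bool) →
        AdjoinRoot (Polynomial.X ^ 2 - Polynomial.C γ) ×
          AdjoinRoot (Polynomial.X ^ 2 - Polynomial.C γ),
      x ≠ 0 ∧
        qPf (AdjoinRoot (Polynomial.X ^ 2 - Polynomial.C γ))
          (fun i => algebraMap F _ (β i)) (algebraMap F _ a) x = 0) :
    ∃ u w : (Fin (n - 1) → Bool) → F × F,
      (u fun _ => false).2 = 0 ∧ (w fun _ => false).2 = 0 ∧
        ∀ s t : F, qPf F β a (s • u + t • w) = s ^ 2 + γ * t ^ 2 :=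
  stmt_14_general F n β a haniso γ hiso
end

section
/- Let φ = ⟨⟨a₁,…,a_{n−1},aₙ]] be a quadratic n-fold Pfister form over a field F of characteristic 2, written φ = [aₙ,1] ⊥ φ''. Suppose d = aₙw² + wx + x² + φ''(u) for some w, x ∈ F, u in the space of φ'' with w ≠ 0. Then there exist b₁,…,b_{n−1} ∈ F× with φ ≅ ⟨⟨b₁,…,b_{n−1}, d/w²]]. -/
/-! The form `⟨⟨a; c]] = ⟨⟨a⟩⟩_b ⊗ [1, c]` is round. Inductively, for `ψ ⊥ e ψ` with `ψ` round a
value `r + e s` is absorbed through `⟨r, e s⟩ ≅ ⟨r + e s, r e s (r + e s)⟩` (characteristic 2),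
with `r s` again a value of `ψ`. Roundness lets a slot `e` be replaced by `e ψ(v)`, and
`⟨⟨e; c]] ≅ ⟨⟨e; c + e]]` then moves `e ψ(v)` into the last slot; inducting over the slots turns
`c` into `c + φ(u)` whenever `u` has no component in the `[1, c]` block. Scaling `u` by `w⁻¹` and
the Artin–Schreier change `c ↦ c + s + s²` with `s = x / w` reach `d / w²`. -/

open QuadraticMap

section General
variable {F : Type*} [Field F] {V W : Type*} [AddCommGroup V] [Module F V]
  [AddCommGroup W] [Module F W]

theorem QuadraticMap.Equivalent.quadIsom {Q₁ : QuadraticForm F V} {Q₂ : QuadraticForm F W}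
    (h : Q₁.Equivalent Q₂) : QuadIsom F Q₁ Q₂ :=
  let ⟨e⟩ := h; ⟨e.toLinearEquiv, e.map_app⟩

theorem QuadraticMap.Equivalent.smul {Q₁ : QuadraticForm F V} {Q₂ : QuadraticForm F W}
    (h : Q₁.Equivalent Q₂) (k : F) : (k • Q₁).Equivalent (k • Q₂) :=
  let ⟨e⟩ := h; ⟨{ e.toLinearEquiv with map_app' := fun v => by simp [e.map_app] }⟩

theorem QuadraticMap.equivalent_sq_smul (Q : QuadraticForm F V) {k : F} (hk : k ≠ 0) :
    ((k ^ 2) • Q).Equivalent Q :=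
  ⟨{ LinearEquiv.smulOfNeZero F V k hk with
      map_app' := fun v => by
        change Q (k • v) = (k ^ 2 • Q) v
        rw [QuadraticMap.map_smul, smul_apply, smul_eq_mul, smul_eq_mul, pow_two] }⟩

theorem QuadraticMap.smul_prod (k : F) (Q₁ : QuadraticForm F V) (Q₂ : QuadraticForm F W) :
    k • Q₁.prod Q₂ = (k • Q₁).prod (k • Q₂) := by
  ext; simp [mul_add]

def IsRound (Q : QuadraticForm F V) : Prop :=
  ∀ v, Q v ≠ 0 → (Q v • Q).Equivalent Q

theorem IsRound.of_equivalent {Q₁ : QuadraticForm F V} {Q₂ : QuadraticForm F W}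
    (h : Q₁.Equivalent Q₂) (h₂ : IsRound Q₂) : IsRound Q₁ := by
  intro v hv
  obtain ⟨e⟩ := h
  rw [← e.map_app] at hv ⊢
  exact (Equivalent.smul ⟨e⟩ _).trans ((h₂ _ hv).trans (Equivalent.symm ⟨e⟩))

theorem IsRound.exists_apply_eq_mul {Q : QuadraticForm F V} (hQ : IsRound Q) {v : V}
    (hv : Q v ≠ 0) (w : V) : ∃ x, Q x = Q v * Q w := by
  obtain ⟨e⟩ := hQ v hv
  exact ⟨e w, by simp [e.map_app]⟩

variable [CharP F 2]

/-- The matrix `!![1, β; 1, α]`, invertible since its determinant is `α - β = α + β`. -/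
def mixEquiv (α β : F) (h : α + β ≠ 0) : (V × V) ≃ₗ[F] V × V where
  toFun z := (z.1 + β • z.2, z.1 + α • z.2)
  invFun z := ((α + β)⁻¹ • (α • z.1 + β • z.2), (α + β)⁻¹ • (z.1 + z.2))
  map_add' x y := by ext <;> simp only [Prod.fst_add, Prod.snd_add, smul_add] <;> abel
  map_smul' k x := by ext <;> simp [smul_add, smul_comm k]
  left_inv z := by
    have h2 : (2 : F) = 0 := CharTwo.two_eq_zero
    have hinv : (α + β)⁻¹ * (α + β) = 1 := inv_mul_cancel₀ h
    ext
    · linear_combination (norm := module) hinv • z.1 + ((α + β)⁻¹ * α * β * h2) • z.2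
    · linear_combination (norm := module) hinv • z.2 + ((α + β)⁻¹ * h2) • z.1
  right_inv z := by
    have h2 : (2 : F) = 0 := CharTwo.two_eq_zero
    have hinv : (α + β)⁻¹ * (α + β) = 1 := inv_mul_cancel₀ h
    ext
    · linear_combination (norm := module) hinv • z.1 + ((α + β)⁻¹ * β * h2) • z.2
    · linear_combination (norm := module) hinv • z.2 + ((α + β)⁻¹ * α * h2) • z.1

theorem QuadraticMap.equivalent_prod_smul_smul (Q : QuadraticForm F V) {α β : F}
    (h : α + β ≠ 0) :
    (((α + β) • Q).prod ((α * β * (α + β)) • Q)).Equivalent ((α • Q).prod (β • Q)) := by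
  refine ⟨{ mixEquiv α β h with map_app' := fun z => ?_ }⟩
  have h2 : (2 : F) = 0 := CharTwo.two_eq_zero
  change α * Q (z.1 + β • z.2) + β * Q (z.1 + α • z.2) = _
  simp only [prod_apply, smul_apply, smul_eq_mul, QuadraticMap.map_add Q, QuadraticMap.map_smul,
    polar_smul_right]
  linear_combination α * β * polar Q z.1 z.2 * h2

theorem IsRound.prod_smul {Q : QuadraticForm F V} (hQ : IsRound Q) (e : F) :
    IsRound (Q.prod (e • Q)) := by
  rintro ⟨v₁, v₂⟩ hv
  simp only [prod_apply, smul_apply, smul_eq_mul] at hv ⊢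
  rw [smul_prod, smul_smul]
  by_cases hs : Q v₂ = 0
  · rw [hs, mul_zero, add_zero] at hv ⊢
    rw [mul_comm, ← smul_smul]
    exact (hQ v₁ hv).prod ((hQ v₁ hv).smul e)
  by_cases hr : Q v₁ = 0
  · rw [hr, zero_add] at hv ⊢
    have he : e ≠ 0 := left_ne_zero_of_mul hv
    have hsq : ((e * Q v₂ * e) • Q).Equivalent Q := by
      rw [show e * Q v₂ * e = e ^ 2 * Q v₂ by ring, ← smul_smul]
      exact (equivalent_sq_smul _ he).trans (hQ v₂ hs)
    rw [← smul_smul]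
    exact Equivalent.trans ⟨IsometryEquiv.prodComm _ _⟩ (hsq.prod ((hQ v₂ hs).smul e))
  · set t := Q v₁ + e * Q v₂
    obtain ⟨x, hx⟩ := hQ.exists_apply_eq_mul hr v₂
    have hx0 : Q x ≠ 0 := by rw [hx]; exact mul_ne_zero hr hs
    have hsnd : ((Q v₁ * (e * Q v₂) * t) • Q).Equivalent ((t * e) • Q) := by
      rw [show Q v₁ * (e * Q v₂) * t = t * e * Q x by rw [hx]; ring, ← smul_smul]
      exact (hQ x hx0).smul _
    refine ((Equivalent.refl _).prod hsnd).symm.trans ?_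
    refine (equivalent_prod_smul_smul Q hv).trans ?_
    rw [← smul_smul]
    exact (hQ v₁ hr).prod ((hQ v₂ hs).smul e)

end General

section Binary
variable {F : Type*} [Field F]

def binNorm (c : F) : QuadraticForm F (F × F) :=
  linMulLin (LinearMap.fst F F F) (LinearMap.fst F F F + LinearMap.snd F F F)
    + c • linMulLin (LinearMap.snd F F F) (LinearMap.snd F F F)

@[simp] theorem binNorm_apply (c : F) (z : F × F) :
    binNorm c z = z.1 ^ 2 + z.1 * z.2 + c * z.2 ^ 2 := by
  simp [binNorm]; ring

/-- Multiplication by `v` in the algebra `F[X]/(X² + X + c)`, in the basis `1, X`. -/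
def mulLeft (c : F) (v : F × F) : (F × F) →ₗ[F] F × F where
  toFun z := (v.1 * z.1 + c * v.2 * z.2, v.2 * z.1 + v.1 * z.2 + v.2 * z.2)
  map_add' x y := by ext <;> simp <;> ring
  map_smul' k x := by ext <;> simp <;> ring

theorem mulLeft_comm (c : F) (v w : F × F) :
    (mulLeft c v).comp (mulLeft c w) = (mulLeft c w).comp (mulLeft c v) := by
  ext <;> simp [mulLeft] <;> ring

variable [CharP F 2]

theorem binNorm_equivalent_add_add_sq (c s : F) :
    (binNorm c).Equivalent (binNorm (c + s + s ^ 2)) := by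
  have h2 : (2 : F) = 0 := CharTwo.two_eq_zero
  let T : (F × F) →ₗ[F] F × F :=
    (LinearMap.fst F F F + s • LinearMap.snd F F F).prod (LinearMap.snd F F F)
  refine ⟨{ LinearEquiv.ofInvolutive T fun z => ?_ with map_app' := fun z => ?_ }⟩
  · ext <;> simp [T]; linear_combination (s * z.2) * h2
  · change binNorm _ (T z) = _
    simp [T]; linear_combination (s * z.1 * z.2 + (s + s ^ 2) * z.2 ^ 2) * h2

theorem binNorm_mulLeft (c : F) (v z : F × F) :
    binNorm c (mulLeft c v z) = binNorm c v * binNorm c z := by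
  have h2 : (2 : F) = 0 := CharTwo.two_eq_zero
  simp only [binNorm_apply, mulLeft, LinearMap.coe_mk, AddHom.coe_mk]
  linear_combination
    c * v.2 * (2 * v.1 * z.1 * z.2 + v.1 * z.2 ^ 2 + v.2 * z.1 * z.2 + v.2 * z.2 ^ 2) * h2

theorem mulLeft_comp_mulLeft_conj (c : F) (v : F × F) :
    (mulLeft c v).comp (mulLeft c (v.1 + v.2, v.2)) = binNorm c v • LinearMap.id := by
  have h2 : (2 : F) = 0 := CharTwo.two_eq_zero
  ext <;> simp [mulLeft]
  · ring
  · linear_combination (v.1 * v.2 + v.2 ^ 2) * h2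
  · linear_combination (c * v.1 * v.2 + c * v.2 ^ 2) * h2
  · linear_combination (v.1 * v.2 + v.2 ^ 2) * h2

theorem isRound_binNorm (c : F) : IsRound (binNorm c) := by
  intro v hv
  have h₁ :
      (mulLeft c v).comp ((binNorm c v)⁻¹ • mulLeft c (v.1 + v.2, v.2)) = LinearMap.id := by
    rw [LinearMap.comp_smul, mulLeft_comp_mulLeft_conj, smul_smul, inv_mul_cancel₀ hv, one_smul]
  have h₂ :
      ((binNorm c v)⁻¹ • mulLeft c (v.1 + v.2, v.2)).comp (mulLeft c v) = LinearMap.id := by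
    rw [LinearMap.smul_comp, mulLeft_comm, mulLeft_comp_mulLeft_conj, smul_smul,
      inv_mul_cancel₀ hv, one_smul]
  exact ⟨{ mulLeft c v with
    invFun := (binNorm c v)⁻¹ • mulLeft c (v.1 + v.2, v.2)
    left_inv := LinearMap.congr_fun h₂
    right_inv := LinearMap.congr_fun h₁
    map_app' := fun z => (binNorm_mulLeft c v z).trans (by simp) }⟩

end Binary

section Pfister
variable {F : Type*} [Field F]

def pfister {m : ℕ} (a : Fin m → F) (c : F) : QuadraticForm F ((Fin m → Bool) → F × F) :=
  pi fun e => mono a e • binNorm c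

theorem coe_pfister {m : ℕ} (a : Fin m → F) (c : F) : ⇑(pfister a c) = qPf F a c := by
  funext x
  simp [pfister, qPf, pi_apply]

theorem pfister_zero_equivalent (a : Fin 0 → F) (c : F) : (pfister a c).Equivalent (binNorm c) :=
  ⟨{ LinearEquiv.funUnique (Fin 0 → Bool) F (F × F) with
    map_app' := fun x => by simp [pfister, pi_apply, mono] }⟩

theorem mono_cons {m : ℕ} (a : Fin (m + 1) → F) (t : Bool) (d : Fin m → Bool) :
    mono a (Fin.cons t d) = (if t then a 0 else 1) * mono (Fin.tail a) d := by
  simp [mono, Fin.prod_univ_succ, Fin.tail]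

theorem Fintype.sum_fin_succ_arrow {M : Type*} [AddCommMonoid M] {m : ℕ}
    (g : (Fin (m + 1) → Bool) → M) :
    ∑ d, g d =
      ∑ d : Fin m → Bool, g (Fin.cons false d) + ∑ d : Fin m → Bool, g (Fin.cons true d) := by
  rw [← (Fin.consEquiv fun _ => Bool).sum_comp g, Fintype.sum_prod_type, Fintype.sum_bool,
    add_comm]
  rfl

theorem pfister_succ_apply {m : ℕ} (a : Fin (m + 1) → F) (c : F)
    (x : (Fin (m + 1) → Bool) → F × F) :
    pfister a c x = pfister (Fin.tail a) c (fun d => x (Fin.cons false d))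
      + a 0 * pfister (Fin.tail a) c (fun d => x (Fin.cons true d)) := by
  simp only [pfister, pi_apply, smul_apply, smul_eq_mul]
  rw [Fintype.sum_fin_succ_arrow, Finset.mul_sum]
  simp [mono_cons, mul_assoc]

variable (F) in
def splitEquiv (m : ℕ) :
    ((Fin (m + 1) → Bool) → F × F) ≃ₗ[F] ((Fin m → Bool) → F × F) × ((Fin m → Bool) → F × F) where
  toFun x := (fun d => x (Fin.cons false d), fun d => x (Fin.cons true d))
  invFun y d := if d 0 then y.2 (Fin.tail d) else y.1 (Fin.tail d)
  map_add' x y := rfl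
  map_smul' c x := rfl
  left_inv x := by
    funext d
    conv_rhs => rw [← Fin.cons_self_tail d]
    by_cases h : d 0 <;> simp [h]
  right_inv y := by ext d <;> simp

theorem pfister_succ_equivalent {m : ℕ} (a : Fin (m + 1) → F) (c : F) :
    (pfister a c).Equivalent ((pfister (Fin.tail a) c).prod (a 0 • pfister (Fin.tail a) c)) :=
  ⟨{ splitEquiv F m with map_app' := fun x => (pfister_succ_apply a c x).symm }⟩

variable [CharP F 2]

theorem isRound_pfister {m : ℕ} (a : Fin m → F) (c : F) : IsRound (pfister a c) := by
  induction m with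
  | zero => exact (isRound_binNorm c).of_equivalent (pfister_zero_equivalent a c)
  | succ m ih => exact ((ih _).prod_smul _).of_equivalent (pfister_succ_equivalent a c)

theorem pfister_equivalent_add_add_sq {m : ℕ} (a : Fin m → F) (c s : F) :
    (pfister a c).Equivalent (pfister a (c + s + s ^ 2)) :=
  Equivalent.pi fun _ => (binNorm_equivalent_add_add_sq c s).smul _

theorem prod_smul_pfister_equivalent_add {m : ℕ} (a : Fin m → F) (c e : F) :
    ((pfister a (c + e)).prod (e • pfister a (c + e))).Equivalent
      ((pfister a c).prod (e • pfister a c)) := by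
  have h2 : (2 : F) = 0 := CharTwo.two_eq_zero
  let T : (((Fin m → Bool) → F × F) × ((Fin m → Bool) → F × F)) →ₗ[F] _ :=
    { toFun := fun z => (fun d => ((z.1 d).1 + e * (z.2 d).2, (z.1 d).2),
        fun d => ((z.2 d).1 + (z.1 d).2, (z.2 d).2))
      map_add' := fun x y => by ext <;> simp <;> ring
      map_smul' := fun k x => by ext <;> simp <;> ring }
  refine ⟨{ LinearEquiv.ofInvolutive T fun z => ?_ with map_app' := fun z => ?_ }⟩
  · ext d <;> simp [T]
    · linear_combination (e * (z.2 d).2) * h2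
    · linear_combination ((z.1 d).2) * h2
  · change (pfister a c).prod (e • pfister a c) (T z) = _
    simp only [prod_apply, smul_apply, smul_eq_mul, pfister, pi_apply, Finset.mul_sum,
      ← Finset.sum_add_distrib]
    refine Finset.sum_congr rfl fun d _ => ?_
    simp [T]
    linear_combination
      mono a d * e * ((z.1 d).1 * (z.2 d).2 + (z.1 d).2 * (z.2 d).1 + (z.1 d).2 * (z.2 d).2) * h2

theorem exists_prod_smul_pfister_equivalent {m : ℕ} {b : Fin m → F} (hb : ∀ i, b i ≠ 0)
    (c : F) {e : F} (he : e ≠ 0) (v : (Fin m → Bool) → F × F) :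
    ∃ b' : Fin (m + 1) → F, (∀ i, b' i ≠ 0) ∧
      ((pfister b c).prod (e • pfister b c)).Equivalent (pfister b' (c + e * pfister b c v)) := by
  by_cases ht : pfister b c v = 0
  · refine ⟨Fin.cons e b, Fin.cases he hb, ?_⟩
    rw [ht, mul_zero, add_zero]
    simpa using (pfister_succ_equivalent (Fin.cons e b) c).symm
  · set t := pfister b c v
    refine ⟨Fin.cons (e * t) b, Fin.cases (mul_ne_zero he ht) hb, ?_⟩
    have hround : ((pfister b c).prod (e • pfister b c)).Equivalent
        ((pfister b c).prod ((e * t) • pfister b c)) := by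
      rw [← smul_smul]
      exact (Equivalent.refl _).prod ((isRound_pfister b c v ht).smul e).symm
    have hsplit := (pfister_succ_equivalent (Fin.cons (e * t) b) (c + e * t)).symm
    simp only [Fin.tail_cons, Fin.cons_zero] at hsplit
    exact hround.trans ((prod_smul_pfister_equivalent_add b c (e * t)).symm.trans hsplit)

theorem exists_pfister_equivalent_add {m : ℕ} {a : Fin m → F} (ha : ∀ i, a i ≠ 0) (c : F)
    {u : (Fin m → Bool) → F × F} (hu : u (fun _ => false) = 0) :
    ∃ b : Fin m → F, (∀ i, b i ≠ 0) ∧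
      (pfister a c).Equivalent (pfister b (c + pfister a c u)) := by
  induction m with
  | zero =>
    have hu₀ : pfister a c u = 0 := by
      simp [pfister, pi_apply, mono, Subsingleton.elim _ (fun _ => false : Fin 0 → Bool), hu]
    exact ⟨a, ha, by rw [hu₀, add_zero]⟩
  | succ m ih =>
    have hu₀ : u (Fin.cons false fun _ => false) = 0 := by
      rw [← hu]; congr; funext i; cases i using Fin.cases <;> rfl
    obtain ⟨b₀, hb₀, ⟨ℓ⟩⟩ :=
      ih (a := Fin.tail a) (u := fun d => u (Fin.cons false d)) (fun i => ha i.succ) hu₀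
    obtain ⟨b, hb, hkey⟩ := exists_prod_smul_pfister_equivalent hb₀ _ (ha 0)
      (ℓ fun d => u (Fin.cons true d))
    rw [ℓ.map_app] at hkey
    refine ⟨b, hb, ?_⟩
    rw [pfister_succ_apply, ← add_assoc]
    exact (pfister_succ_equivalent a c).trans
      ((Equivalent.prod ⟨ℓ⟩ (Equivalent.smul ⟨ℓ⟩ _)).trans hkey)

end Pfister

theorem stmt_16_general (F : Type*) [Field F] [CharP F 2] (n : ℕ)
    (a : Fin (n - 1) → F) (ha : ∀ i, a i ≠ 0) (an : F)
    (d w x : F) (hw : w ≠ 0)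
    (u : (Fin (n - 1) → Bool) → F × F) (hu : (u fun _ => false) = 0)
    (hd : d = an * w ^ 2 + w * x + x ^ 2 + qPf F a an u) :
    ∃ b : Fin (n - 1) → F, (∀ i, b i ≠ 0) ∧
      QuadIsom F (qPf F a an) (qPf F b (d / w ^ 2)) := by
  obtain ⟨b, hb, h⟩ := exists_pfister_equivalent_add ha an (u := w⁻¹ • u) (by simp [hu])
  have hd' : an + pfister a an (w⁻¹ • u) + x / w + (x / w) ^ 2 = d / w ^ 2 := by
    rw [QuadraticMap.map_smul, smul_eq_mul, coe_pfister, hd]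
    field_simp
    ring
  refine ⟨b, hb, ?_⟩
  rw [← coe_pfister, ← coe_pfister, ← hd']
  exact (h.trans (pfister_equivalent_add_add_sq b _ (x / w))).quadIsom

/-- write `φ = ⟨⟨a₁,…,a_{n-1},aₙ]] = [aₙ,1] ⊥ φ''` (here `φ''(u)`
is the value of `φ` on a vector `u` vanishing on the `[1,aₙ]`-block). If
`d = aₙw² + wx + x² + φ''(u)` with `w ≠ 0`, then `φ ≅ ⟨⟨b₁,…,b_{n-1}, d/w²]]`
for some `b₁,…,b_{n-1} ∈ F×`. -/
theorem stmt_16 (F : Type*) [Field F] [CharP F 2] (n : ℕ) (hn : 1 ≤ n)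
    (a : Fin (n - 1) → F) (ha : ∀ i, a i ≠ 0) (an : F)
    (d w x : F) (hw : w ≠ 0)
    (u : (Fin (n - 1) → Bool) → F × F) (hu : (u fun _ => false) = 0)
    (hd : d = an * w ^ 2 + w * x + x ^ 2 + qPf F a an u) :
    ∃ b : Fin (n - 1) → F, (∀ i, b i ≠ 0) ∧
      QuadIsom F (qPf F a an) (qPf F b (d / w ^ 2)) :=
  stmt_16_general F n a ha an d w x hw u hu hd
end
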